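/- arXiv:2405.09378 — 8 statements merged into one kernel-verified Lean document; each statement's English description precedes it below -/
import Mathlib

section
/- Every symplectic matrix S ∈ Sp(d,ℝ) admits a (non-unique) factorization S = V_Q · D_L · V_Pᵀ · Π_J, for some symmetric matrices P, Q ∈ Sym(d,ℝ), some invertible matrix L ∈ GL(d,ℝ), and some index set J ⊆ {1,…,d} (Dopico–Johnson factorization). -/
open Matrix

noncomputable section

/-- `I_J`: the diagonal matrix whose `j`-th diagonal entry is `1` if `j ∈ J` and `0` otherwise. -/
def IdxMat {ι : Type*} [Fintype ι] [DecidableEq ι] (J : Finset ι) : Matrix ι ι ℝ :=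
  Matrix.diagonal fun j => if j ∈ J then (1 : ℝ) else 0

/-- `V_Q = [[I,0],[Q,I]]`. -/
def VMat {ι : Type*} [Fintype ι] [DecidableEq ι] (Q : Matrix ι ι ℝ) :
    Matrix (ι ⊕ ι) (ι ⊕ ι) ℝ :=
  Matrix.fromBlocks 1 0 Q 1

/-- `V_Pᵀ = [[I,P],[0,I]]`. -/
def VTMat {ι : Type*} [Fintype ι] [DecidableEq ι] (P : Matrix ι ι ℝ) :
    Matrix (ι ⊕ ι) (ι ⊕ ι) ℝ :=
  Matrix.fromBlocks 1 P 0 1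

/-- `D_L = [[L⁻¹,0],[0,Lᵀ]]`. -/
def DMat {ι : Type*} [Fintype ι] [DecidableEq ι] (L : Matrix ι ι ℝ) :
    Matrix (ι ⊕ ι) (ι ⊕ ι) ℝ :=
  Matrix.fromBlocks L⁻¹ 0 0 Lᵀ

/-- `Π_J = [[I_{Jᶜ},I_J],[−I_J,I_{Jᶜ}]]`, the symplectic interchange matrix. -/
def PiMat {ι : Type*} [Fintype ι] [DecidableEq ι] (J : Finset ι) :
    Matrix (ι ⊕ ι) (ι ⊕ ι) ℝ :=
  Matrix.fromBlocks (IdxMat Jᶜ) (IdxMat J) (-(IdxMat J)) (IdxMat Jᶜ)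

section Aux
variable {ι : Type*} [Fintype ι] [DecidableEq ι]

lemma idx_transpose (J : Finset ι) : (IdxMat J)ᵀ = IdxMat J := Matrix.diagonal_transpose _

lemma idx_mul_self (J : Finset ι) : IdxMat J * IdxMat J = IdxMat J := by
  rw [IdxMat, Matrix.diagonal_mul_diagonal]
  exact congrArg Matrix.diagonal (funext fun j => by by_cases h : j ∈ J <;> simp [h])

lemma idx_mul_compl (J : Finset ι) : IdxMat J * IdxMat Jᶜ = 0 := by
  rw [IdxMat, IdxMat, Matrix.diagonal_mul_diagonal, ← Matrix.diagonal_zero]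
  exact congrArg Matrix.diagonal (funext fun j => by by_cases h : j ∈ J <;> simp [h])

lemma idx_compl_mul (J : Finset ι) : IdxMat Jᶜ * IdxMat J = 0 := by
  rw [IdxMat, IdxMat, Matrix.diagonal_mul_diagonal, ← Matrix.diagonal_zero]
  exact congrArg Matrix.diagonal (funext fun j => by by_cases h : j ∈ J <;> simp [h])

lemma idx_compl_add (J : Finset ι) : IdxMat Jᶜ + IdxMat J = 1 := by
  rw [IdxMat, IdxMat, Matrix.diagonal_add, ← Matrix.diagonal_one]
  exact congrArg Matrix.diagonal (funext fun j => by by_cases h : j ∈ J <;> simp [h])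

lemma idx_add_compl (J : Finset ι) : IdxMat J + IdxMat Jᶜ = 1 := by
  rw [add_comm]; exact idx_compl_add J

lemma piMat_transpose_mul (J : Finset ι) : (PiMat J)ᵀ * PiMat J = 1 := by
  rw [PiMat, Matrix.fromBlocks_transpose, Matrix.fromBlocks_multiply, Matrix.transpose_neg,
    idx_transpose, idx_transpose, ← Matrix.fromBlocks_one]
  simp only [Matrix.neg_mul, Matrix.mul_neg, neg_neg, idx_mul_self, idx_mul_compl,
    idx_compl_mul, neg_zero, zero_add, add_zero, ← neg_add, idx_compl_add, idx_add_compl]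

lemma piMat_mem (J : Finset ι) : PiMat J ∈ Matrix.symplecticGroup ι ℝ := by
  rw [SymplecticGroup.mem_iff, Matrix.J, PiMat, Matrix.fromBlocks_transpose,
    Matrix.fromBlocks_multiply, Matrix.fromBlocks_multiply, Matrix.transpose_neg,
    idx_transpose, idx_transpose]
  simp only [Matrix.mul_zero, Matrix.mul_one, Matrix.mul_neg, Matrix.neg_mul, zero_add,
    add_zero, neg_neg, neg_zero]
  simp only [idx_mul_self, idx_mul_compl, idx_compl_mul, neg_zero, zero_add, add_zero,
    ← neg_add, idx_compl_add, idx_add_compl]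

end Aux

open Submodule in
lemma exists_coord_complement {d : ℕ} (X : Submodule ℝ (Fin d → ℝ)) :
    ∃ J : Finset (Fin d),
      Disjoint X (span ℝ ((fun j => (Pi.single j 1 : Fin d → ℝ)) '' ↑J)) ∧
      X ⊔ span ℝ ((fun j => (Pi.single j 1 : Fin d → ℝ)) '' ↑J) = ⊤ := by
  classical
  set e : Fin d → (Fin d → ℝ) := fun j => Pi.single j 1 with he
  have he_inj : Function.Injective e := fun i j h => by
    by_contra hne
    have := congrFun h i
    simp [he, Pi.single_apply, hne] at this
  obtain ⟨b, hbX, hbspan, hbind⟩ := exists_linearIndependent ℝ (X : Set (Fin d → ℝ))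
  rw [Submodule.span_eq X] at hbspan
  have hbsub : b ⊆ b ∪ Set.range e := Set.subset_union_left
  replace hbind : LinearIndepOn ℝ id b := hbind
  set u := hbind.extend hbsub with hu
  have hub : b ⊆ u := hbind.subset_extend _
  have hut : u ⊆ b ∪ Set.range e := hbind.extend_subset _
  have huind : LinearIndependent ℝ ((↑) : u → (Fin d → ℝ)) := hbind.linearIndepOn_extend hbsub
  have huspan : span ℝ u = ⊤ := by
    rw [hu, hbind.span_extend_eq_span]
    apply top_unique
    intro v _
    have hv : v = ∑ j, v j • e j := by
      funext k
      simp [he, Finset.sum_apply, Pi.single_apply]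
    rw [hv]
    exact Submodule.sum_mem _ fun j _ =>
      Submodule.smul_mem _ _ (Submodule.subset_span (Set.mem_union_right _ ⟨j, rfl⟩))
  set J : Finset (Fin d) := Finset.univ.filter (fun j => e j ∈ u \ b) with hJ
  have himg : e '' ↑J = u \ b := by
    ext w
    constructor
    · rintro ⟨j, hj, rfl⟩
      simp only [hJ, Finset.coe_filter, Set.mem_setOf_eq, Finset.mem_univ, true_and] at hj
      exact hj
    · intro hw
      rcases hut hw.1 with h | ⟨j, rfl⟩
      · exact absurd h hw.2
      · exact ⟨j, by simp [hJ]; exact ⟨hw.1, hw.2⟩, rfl⟩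
  refine ⟨J, ?_, ?_⟩
  · -- disjointness
    rw [himg, ← hbspan]
    have : LinearIndependent ℝ ((↑) : u → (Fin d → ℝ)) := huind
    have hds : Disjoint {x : u | (x : Fin d → ℝ) ∈ b} {x : u | (x : Fin d → ℝ) ∈ b}ᶜ :=
      disjoint_compl_right
    have := huind.disjoint_span_image (s := {x : u | (x : Fin d → ℝ) ∈ b}) hds
    have h1 : (↑) '' {x : u | (x : Fin d → ℝ) ∈ b} = b := by
      ext w; constructor
      · rintro ⟨x, hx, rfl⟩; exact hx
      · intro hw; exact ⟨⟨w, hub hw⟩, hw, rfl⟩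
    have h2 : (↑) '' ({x : u | (x : Fin d → ℝ) ∈ b}ᶜ : Set u) = u \ b := by
      ext w; constructor
      · rintro ⟨x, hx, rfl⟩; exact ⟨x.2, hx⟩
      · intro hw; exact ⟨⟨w, hw.1⟩, hw.2, rfl⟩
    rwa [h1, h2] at this
  · rw [himg, ← hbspan, ← Submodule.span_union, Set.union_diff_cancel hub, huspan]

open Submodule in
lemma exists_idx_isUnit {d : ℕ} (A B : Matrix (Fin d) (Fin d) ℝ)
    (hAB : A * Bᵀ = B * Aᵀ)
    (hrank : ∀ x : Fin d → ℝ, x ᵥ* A = 0 → x ᵥ* B = 0 → x = 0) :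
    ∃ J : Finset (Fin d), IsUnit (A * IdxMat Jᶜ + B * IdxMat J) := by
  classical
  obtain ⟨J, hdisj, hsup⟩ := exists_coord_complement (LinearMap.range A.vecMulLinear)
  refine ⟨J, ?_⟩
  rw [Matrix.isUnit_iff_isUnit_det, isUnit_iff_ne_zero]
  intro hdet
  obtain ⟨x, hx0, hxM⟩ := Matrix.exists_vecMul_eq_zero_iff.mpr hdet
  set uA : Fin d → ℝ := x ᵥ* A with huA
  set uB : Fin d → ℝ := x ᵥ* B with huB
  have hcoord : ∀ j, uA j * (if j ∈ Jᶜ then (1:ℝ) else 0) + uB j * (if j ∈ J then (1:ℝ) else 0) = 0 := by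
    intro j
    have := congrFun hxM j
    rwa [Matrix.vecMul_add, Pi.add_apply, IdxMat, IdxMat, ← Matrix.vecMul_vecMul,
      ← Matrix.vecMul_vecMul, Matrix.vecMul_diagonal, Matrix.vecMul_diagonal, Pi.zero_apply]
      at this
  have hA_on : ∀ j ∉ J, uA j = 0 := by
    intro j hj
    have := hcoord j
    simp [Finset.mem_compl, hj] at this
    exact this
  have hB_on : ∀ j ∈ J, uB j = 0 := by
    intro j hj
    have := hcoord j
    simp [Finset.mem_compl, hj] at this
    exact this
  -- uA is in X and supported on J, hence zero
  have huA_mem : uA ∈ LinearMap.range A.vecMulLinear := ⟨x, rfl⟩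
  have huA_span : uA ∈ span ℝ ((fun j => (Pi.single j 1 : Fin d → ℝ)) '' ↑J) := by
    have hrepr : uA = ∑ j ∈ J, uA j • (Pi.single j 1 : Fin d → ℝ) := by
      funext k
      rw [Finset.sum_apply]
      by_cases hk : k ∈ J
      · simp [Pi.single_apply, Finset.sum_ite_eq' J k, hk]
      · simp only [Pi.smul_apply, Pi.single_apply, smul_eq_mul]
        rw [Finset.sum_congr rfl (fun j hj => ?_), Finset.sum_const_zero, hA_on k hk]
        have : k ≠ j := fun h => hk (h ▸ hj)
        simp [this]
    rw [hrepr]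
    exact Submodule.sum_mem _ fun j hj =>
      Submodule.smul_mem _ _ (Submodule.subset_span ⟨j, hj, rfl⟩)
  have huA0 : uA = 0 := by
    have := Submodule.disjoint_def.mp hdisj uA huA_mem huA_span
    exact this
  -- uB is orthogonal to everything, hence zero
  have huB0 : uB = 0 := by
    set f : (Fin d → ℝ) →ₗ[ℝ] ℝ :=
      { toFun := fun w => uB ⬝ᵥ w
        map_add' := fun w₁ w₂ => dotProduct_add _ _ _
        map_smul' := fun c w => by simpa using dotProduct_smul c uB w } with hf
    have htop : LinearMap.range A.vecMulLinear ⊔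
        span ℝ ((fun j => (Pi.single j 1 : Fin d → ℝ)) '' ↑J) ≤ LinearMap.ker f := by
      apply sup_le
      · rintro w ⟨y, rfl⟩
        simp only [LinearMap.mem_ker, hf, LinearMap.coe_mk, AddHom.coe_mk,
          Matrix.vecMulLinear_apply]
        have hz : uB ᵥ* Aᵀ = 0 := by
          rw [huB, Matrix.vecMul_vecMul, ← hAB, ← Matrix.vecMul_vecMul, ← huA, huA0,
            Matrix.zero_vecMul]
        rw [← Matrix.mulVec_transpose, Matrix.dotProduct_mulVec, hz, zero_dotProduct]
      · rw [Submodule.span_le]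
        rintro w ⟨j, hj, rfl⟩
        simp only [SetLike.mem_coe, LinearMap.mem_ker, hf, LinearMap.coe_mk, AddHom.coe_mk]
        rw [dotProduct_single, hB_on j hj, zero_mul]
    rw [hsup, top_le_iff] at htop
    have : uB ⬝ᵥ uB = 0 := by
      have hm : uB ∈ LinearMap.ker f := htop ▸ Submodule.mem_top
      simpa [hf] using hm
    exact dotProduct_self_eq_zero.mp this
  exact hx0 (hrank x huA0 huB0)

/-- Dopico–Johnson factorization: every symplectic matrix `S ∈ Sp(d,ℝ)` factors as
`S = V_Q ⬝ D_L ⬝ V_Pᵀ ⬝ Π_J` with `P, Q` symmetric, `L` invertible and `J ⊆ {1,…,d}`. -/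
theorem dopico_johnson_factorization (d : ℕ) (hd : 0 < d)
    (S : Matrix (Fin d ⊕ Fin d) (Fin d ⊕ Fin d) ℝ)
    (hS : S ∈ Matrix.symplecticGroup (Fin d) ℝ) :
    ∃ (P Q L : Matrix (Fin d) (Fin d) ℝ) (J : Finset (Fin d)),
      P.IsSymm ∧ Q.IsSymm ∧ IsUnit L ∧
        S = VMat Q * DMat L * VTMat P * PiMat J := by
  classical
  have hdetS : IsUnit S.det := SymplecticGroup.symplectic_det hS
  set A := S.toBlocks₁₁ with hA
  set B := S.toBlocks₁₂ with hB
  set C := S.toBlocks₂₁ with hC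
  set D := S.toBlocks₂₂ with hD
  have hblocks : S = fromBlocks A B C D := (Matrix.fromBlocks_toBlocks S).symm
  -- A Bᵀ symmetric
  have hrowS : S * Matrix.J (Fin d) ℝ * Sᵀ = Matrix.J (Fin d) ℝ := SymplecticGroup.mem_iff.mp hS
  have hABsym : A * Bᵀ = B * Aᵀ := by
    rw [hblocks, Matrix.J, fromBlocks_transpose, fromBlocks_multiply, fromBlocks_multiply] at hrowS
    have h11 := congrArg Matrix.toBlocks₁₁ hrowS
    simp only [Matrix.toBlocks_fromBlocks₁₁, mul_zero, zero_mul, mul_one, one_mul, add_zero,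
      zero_add, mul_neg, neg_mul, neg_neg, mul_neg_one] at h11
    exact (add_neg_eq_zero.mp h11).symm
  -- the rank condition
  have hrank : ∀ x : Fin d → ℝ, x ᵥ* A = 0 → x ᵥ* B = 0 → x = 0 := by
    intro x hxA hxB
    have hz : Sum.elim x (0 : Fin d → ℝ) ᵥ* S = 0 := by
      rw [hblocks, Matrix.vecMul_fromBlocks]
      funext k
      cases k with
      | inl j => simp [hxA]
      | inr j => simp [hxB]
    have := congrArg (fun v => v ᵥ* S⁻¹) hz
    simp only [Matrix.vecMul_vecMul, Matrix.mul_nonsing_inv S hdetS, Matrix.vecMul_one,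
      Matrix.zero_vecMul] at this
    funext j
    exact congrFun this (Sum.inl j)
  obtain ⟨J, hM⟩ := exists_idx_isUnit A B hABsym hrank
  set M := A * IdxMat Jᶜ + B * IdxMat J with hMdef
  set N := A * -(IdxMat J) + B * IdxMat Jᶜ with hNdef
  set R := C * IdxMat Jᶜ + D * IdxMat J with hRdef
  set T := C * -(IdxMat J) + D * IdxMat Jᶜ with hTdef
  have hMdet : IsUnit M.det := (Matrix.isUnit_iff_isUnit_det M).mp hM
  have hMTdet : IsUnit (Mᵀ).det := by rwa [Matrix.det_transpose]
  have hS' : S * (PiMat J)ᵀ = fromBlocks M N R T := by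
    conv_lhs => rw [hblocks]
    rw [PiMat, fromBlocks_transpose, Matrix.transpose_neg, idx_transpose, idx_transpose,
      fromBlocks_multiply]
  have hS'mem : fromBlocks M N R T ∈ Matrix.symplecticGroup (Fin d) ℝ := by
    rw [← hS']
    exact mul_mem hS (SymplecticGroup.transpose_mem (piMat_mem J))
  -- relations
  have hrow' := SymplecticGroup.mem_iff.mp hS'mem
  have hcol' := SymplecticGroup.mem_iff'.mp hS'mem
  rw [Matrix.J, fromBlocks_transpose, fromBlocks_multiply, fromBlocks_multiply] at hrow' hcol'
  have h1 : M * Nᵀ = N * Mᵀ := by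
    have h11 := congrArg Matrix.toBlocks₁₁ hrow'
    simp only [Matrix.toBlocks_fromBlocks₁₁, mul_zero, zero_mul, mul_one, one_mul, add_zero,
      zero_add, mul_neg, neg_mul, neg_neg, mul_neg_one] at h11
    exact (add_neg_eq_zero.mp h11).symm
  have h2 : Rᵀ * M = Mᵀ * R := by
    have h11 := congrArg Matrix.toBlocks₁₁ hcol'
    simp only [Matrix.toBlocks_fromBlocks₁₁, mul_zero, zero_mul, mul_one, one_mul, add_zero,
      zero_add, mul_neg, neg_mul, neg_neg, mul_neg_one] at h11
    exact add_neg_eq_zero.mp h11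
  have h3 : Mᵀ * T = 1 + Rᵀ * N := by
    have h12 := congrArg Matrix.toBlocks₁₂ hcol'
    simp only [Matrix.toBlocks_fromBlocks₁₂, mul_zero, zero_mul, mul_one, one_mul, add_zero,
      zero_add, mul_neg, neg_mul, neg_neg, mul_neg_one] at h12
    -- h12 : Rᵀ * N + -(Mᵀ * T) = -1
    have h' : Rᵀ * N - Mᵀ * T = -1 := by rwa [sub_eq_add_neg]
    rw [sub_eq_iff_eq_add] at h'
    rw [h', ← add_assoc]
    simp
  -- define factors
  set L := M⁻¹ with hLdef
  set P := M⁻¹ * N with hPdef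
  set Q := R * M⁻¹ with hQdef
  have hQ' : Mᵀ⁻¹ * Rᵀ = R * M⁻¹ := by
    have hR : Rᵀ = Mᵀ * (R * M⁻¹) := by
      rw [← Matrix.mul_assoc, ← h2, Matrix.mul_nonsing_inv_cancel_right _ _ hMdet]
    rw [hR, Matrix.nonsing_inv_mul_cancel_left _ _ hMTdet]
  have hP' : Nᵀ * Mᵀ⁻¹ = M⁻¹ * N := by
    have hN : Nᵀ = M⁻¹ * N * Mᵀ := by
      rw [Matrix.mul_assoc, ← h1, Matrix.nonsing_inv_mul_cancel_left _ _ hMdet]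
    rw [hN, Matrix.mul_nonsing_inv_cancel_right _ _ hMTdet]
  have hPsym : P.IsSymm := by
    rw [Matrix.IsSymm, hPdef, Matrix.transpose_mul, Matrix.transpose_nonsing_inv, hP']
  have hQsym : Q.IsSymm := by
    rw [Matrix.IsSymm, hQdef, Matrix.transpose_mul, Matrix.transpose_nonsing_inv, hQ']
  have hT : T = Mᵀ⁻¹ + R * M⁻¹ * N := by
    have := congrArg (fun Z => Mᵀ⁻¹ * Z) h3
    simp only [Matrix.nonsing_inv_mul_cancel_left _ _ hMTdet, Matrix.mul_add, Matrix.mul_one]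
      at this
    rw [this, ← Matrix.mul_assoc, hQ']
  refine ⟨P, Q, L, J, hPsym, hQsym, Matrix.isUnit_nonsing_inv_iff.mpr hM, ?_⟩
  have hprod : VMat Q * DMat L * VTMat P = fromBlocks M N R T := by
    rw [VMat, DMat, VTMat, fromBlocks_multiply, fromBlocks_multiply]
    simp only [Matrix.one_mul, Matrix.mul_one, Matrix.zero_mul, Matrix.mul_zero, add_zero,
      zero_add]
    have e1 : L⁻¹ = M := Matrix.nonsing_inv_nonsing_inv M hMdet
    rw [e1]
    have e2 : M * P = N := by
      rw [hPdef, Matrix.mul_nonsing_inv_cancel_left _ _ hMdet]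
    have e3 : Q * M = R := by
      rw [hQdef, Matrix.nonsing_inv_mul_cancel_right _ _ hMdet]
    rw [e3, e2, hT, hLdef, hPdef, Matrix.transpose_nonsing_inv, ← Matrix.mul_assoc]
    exact congrArg _ (add_comm _ _)
  rw [hprod, ← hS', Matrix.mul_assoc, piMat_transpose_mul, Matrix.mul_one]


end
end

section
/- Let S ∈ Sp(d,ℝ) have a Dopico–Johnson factorization S = V_Q · D_L · V_Pᵀ · Π_J with Q, P ∈ Sym(d,ℝ), L ∈ GL(d,ℝ), J ⊆ {1,…,d}, and write S = [[A,B],[C,D]] in d×d blocks. Then B is invertible (i.e., S is free) if and only if either J = {1,…,d}, or J ⊊ {1,…,d} and the submatrix P_{J^cJ^c} = (p_{jk})_{j,k∈J^c} is invertible. -/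
open Matrix

noncomputable section

/-- A symplectic matrix with Dopico–Johnson factorization `V_Q D_L V_Pᵀ Π_J` is free
(its upper-right block `B` is invertible) iff either `J = {1,…,d}`, or `J ⊊ {1,…,d}` and
the submatrix `P_{JᶜJᶜ}` is invertible. -/
theorem free_iff_dopico_johnson (d : ℕ) (hd : 0 < d)
    (S : Matrix (Fin d ⊕ Fin d) (Fin d ⊕ Fin d) ℝ)
    (hS : S ∈ Matrix.symplecticGroup (Fin d) ℝ)
    (Q P L : Matrix (Fin d) (Fin d) ℝ) (hQ : Q.IsSymm) (hP : P.IsSymm)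
    (hL : IsUnit L) (J : Finset (Fin d))
    (hfact : S = VMat Q * DMat L * VTMat P * PiMat J) :
    IsUnit S.toBlocks₁₂ ↔
      (J = Finset.univ ∨
        (J ≠ Finset.univ ∧
          IsUnit (P.submatrix
            (fun j : {x // x ∈ (Jᶜ : Finset (Fin d))} => (j : Fin d))
            (fun k : {x // x ∈ (Jᶜ : Finset (Fin d))} => (k : Fin d))))) := by
  set Psub : Matrix {x // x ∈ (Jᶜ : Finset (Fin d))} {x // x ∈ (Jᶜ : Finset (Fin d))} ℝ :=
    P.submatrix (fun j => (j : Fin d)) (fun k => (k : Fin d)) with hPsub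
  -- Step 1: identify the B block
  have hB : S.toBlocks₁₂ = L⁻¹ * (IdxMat J + P * IdxMat Jᶜ) := by
    subst hfact
    simp [VMat, DMat, VTMat, PiMat, IdxMat, Matrix.fromBlocks_multiply,
      Matrix.toBlocks_fromBlocks₁₂, Matrix.mul_add, Matrix.mul_assoc]
  -- Step 2: the reindexing equivalence
  obtain ⟨e, he1, he2⟩ :
      ∃ e : ({x // x ∈ J} ⊕ {x // x ∈ (Jᶜ : Finset (Fin d))}) ≃ Fin d,
        (∀ a : {x // x ∈ J}, e (Sum.inl a) = (a : Fin d)) ∧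
        (∀ a : {x // x ∈ (Jᶜ : Finset (Fin d))}, e (Sum.inr a) = (a : Fin d)) :=
    ⟨(Equiv.sumCongr (Equiv.refl {x // x ∈ J})
      (Equiv.subtypeEquivRight (fun x => Finset.mem_compl))).trans
      (Equiv.sumCompl (· ∈ J)), fun a => rfl, fun a => rfl⟩
  have hsub : (IdxMat J + P * IdxMat Jᶜ).submatrix e e =
      Matrix.fromBlocks 1
        (P.submatrix (fun j : {x // x ∈ J} => (j : Fin d)) (fun k : {x // x ∈ (Jᶜ : Finset (Fin d))} => (k : Fin d)))
        0 Psub := by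
    have hmem : ∀ a : {x // x ∈ (Jᶜ : Finset (Fin d))}, (a : Fin d) ∉ J :=
      fun a => Finset.mem_compl.mp a.2
    ext a b
    rcases a with ⟨a, ha⟩ | ⟨a, ha⟩ <;> rcases b with ⟨b, hb⟩ | ⟨b, hb⟩
    · simp [IdxMat, he1, he2, Matrix.mul_diagonal, Matrix.diagonal_apply,
        Matrix.one_apply, ha, hb, hPsub]
    · have hab : a ≠ b := fun h => Finset.mem_compl.mp hb (h ▸ ha)
      simp [IdxMat, he1, he2, Matrix.mul_diagonal, Matrix.diagonal_apply,
        Matrix.one_apply, ha, Finset.mem_compl.mp hb, hab, hPsub]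
    · have hab : a ≠ b := fun h => Finset.mem_compl.mp ha (h ▸ hb)
      simp [IdxMat, he1, he2, Matrix.mul_diagonal, Matrix.diagonal_apply,
        Matrix.one_apply, Finset.mem_compl.mp ha, hb, hab, hPsub]
    · simp [IdxMat, he1, he2, Matrix.mul_diagonal, Matrix.diagonal_apply,
        Matrix.one_apply, Finset.mem_compl.mp ha, Finset.mem_compl.mp hb, hPsub]
  -- Step 3: determinant identity
  have hdet : (IdxMat J + P * IdxMat Jᶜ).det = Psub.det := by
    rw [← Matrix.det_submatrix_equiv_self e, hsub, Matrix.det_fromBlocks_zero₂₁]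
    simp
  -- Step 4: IsUnit B ↔ IsUnit Psub
  have hLdet : IsUnit (L⁻¹).det := by
    rw [Matrix.det_nonsing_inv]
    exact isUnit_ringInverse.mpr ((Matrix.isUnit_iff_isUnit_det L).mp hL)
  have key : IsUnit S.toBlocks₁₂ ↔ IsUnit Psub := by
    rw [hB, Matrix.isUnit_iff_isUnit_det, Matrix.det_mul, hdet,
      Matrix.isUnit_iff_isUnit_det Psub]
    exact ⟨fun h => (IsUnit.mul_iff.mp h).2, fun h => hLdet.mul h⟩
  rw [key]
  constructor
  · intro h
    by_cases hJ : J = Finset.univ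
    · exact Or.inl hJ
    · exact Or.inr ⟨hJ, h⟩
  · rintro (hJ | ⟨-, h⟩)
    · have : IsEmpty {x // x ∈ (Jᶜ : Finset (Fin d))} :=
        ⟨fun x => Finset.notMem_empty x.1 (by simpa [hJ, Finset.compl_univ] using x.2)⟩
      rw [Matrix.isUnit_iff_isUnit_det, Matrix.det_isEmpty]
      exact isUnit_one
    · exact h

end
end

section
/- Let S ∈ Sp(d,ℝ) have a Dopico–Johnson factorization S = V_Q · D_L · V_Pᵀ · Π_J with Q, P ∈ Sym(d,ℝ), L ∈ GL(d,ℝ), J ⊆ {1,…,d}, and write S = [[A,B],[C,D]] in d×d blocks. Then B = 0 if and only if P = 0 and J = ∅. -/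
open Matrix

noncomputable section

/-- A symplectic matrix with Dopico–Johnson factorization `V_Q D_L V_Pᵀ Π_J` has upper-right
block `B = 0` iff `P = 0` and `J = ∅`. -/
theorem upper_right_block_zero_iff (d : ℕ) (hd : 0 < d)
    (S : Matrix (Fin d ⊕ Fin d) (Fin d ⊕ Fin d) ℝ)
    (hS : S ∈ Matrix.symplecticGroup (Fin d) ℝ)
    (Q P L : Matrix (Fin d) (Fin d) ℝ) (hQ : Q.IsSymm) (hP : P.IsSymm)
    (hL : IsUnit L) (J : Finset (Fin d))
    (hfact : S = VMat Q * DMat L * VTMat P * PiMat J) :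
    S.toBlocks₁₂ = 0 ↔ (P = 0 ∧ J = ∅) := by
  have hdet : IsUnit L.det := (Matrix.isUnit_iff_isUnit_det L).mp hL
  have hB : S.toBlocks₁₂ = L⁻¹ * (IdxMat J + P * IdxMat Jᶜ) := by
    subst hfact
    simp [VMat, DMat, VTMat, PiMat, Matrix.fromBlocks_multiply, Matrix.toBlocks_fromBlocks₁₂,
      Matrix.mul_add]
    noncomm_ring
  rw [hB]
  constructor
  · intro h
    have h2 : IdxMat J + P * IdxMat Jᶜ = 0 := by
      have := congrArg (L * ·) h
      simpa [← Matrix.mul_assoc, Matrix.mul_nonsing_inv L hdet] using this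
    have hJ : J = ∅ := by
      by_contra hne
      obtain ⟨j, hj⟩ := Finset.nonempty_iff_ne_empty.mpr hne
      have := congrFun (congrFun h2 j) j
      simp [IdxMat, Matrix.add_apply, Matrix.mul_diagonal, Matrix.diagonal_apply_eq, hj,
        Finset.mem_compl] at this
    subst hJ
    have hI0 : IdxMat (∅ : Finset (Fin d)) = 0 := by
      simp [IdxMat]
    have hI1 : IdxMat ((∅ : Finset (Fin d))ᶜ) = 1 := by
      simp [IdxMat, Finset.mem_compl, Matrix.diagonal_one]
    rw [hI0, hI1, zero_add, Matrix.mul_one] at h2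
    exact ⟨h2, rfl⟩
  · rintro ⟨rfl, rfl⟩
    have hI0 : IdxMat (∅ : Finset (Fin d)) = 0 := by simp [IdxMat]
    simp [hI0]

end
end

section
/- Let P ∈ Sym(d,ℝ) and J ⊆ {1,…,d}. Then the matrices I_{J^c}·P·I_{J^c} and I_J·P·I_J are symmetric, the matrix I + I_{J^c}·P·I_J is invertible with inverse I − I_{J^c}·P·I_J, and the following matrix identity holds: Π_J⁻¹ · V_Pᵀ · Π_J = V_{I_{J^c}PI_{J^c}}ᵀ · D_{I+I_{J^c}PI_J} · V_{−I_JPI_J}. -/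
open Matrix

noncomputable section

lemma IdxMat_transpose {ι : Type*} [Fintype ι] [DecidableEq ι] (J : Finset ι) :
    (IdxMat J)ᵀ = IdxMat J := by simp [IdxMat, Matrix.diagonal_transpose]

lemma IdxMat_mul_self {ι : Type*} [Fintype ι] [DecidableEq ι] (J : Finset ι) :
    IdxMat J * IdxMat J = IdxMat J := by
  simp only [IdxMat, Matrix.diagonal_mul_diagonal]
  apply congrArg Matrix.diagonal
  funext j; by_cases h : j ∈ J <;> simp [h]

lemma IdxMat_compl_mul {ι : Type*} [Fintype ι] [DecidableEq ι] (J : Finset ι) :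
    IdxMat Jᶜ * IdxMat J = 0 := by
  simp only [IdxMat, Matrix.diagonal_mul_diagonal]
  have h : (fun j => (if j ∈ Jᶜ then (1:ℝ) else 0) * (if j ∈ J then (1:ℝ) else 0)) = fun _ => 0 := by
    funext j; by_cases h : j ∈ J <;> simp [h]
  rw [h, Matrix.diagonal_zero]

lemma IdxMat_mul_compl {ι : Type*} [Fintype ι] [DecidableEq ι] (J : Finset ι) :
    IdxMat J * IdxMat Jᶜ = 0 := by
  simp only [IdxMat, Matrix.diagonal_mul_diagonal]
  have h : (fun j => (if j ∈ J then (1:ℝ) else 0) * (if j ∈ Jᶜ then (1:ℝ) else 0)) = fun _ => 0 := by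
    funext j; by_cases h : j ∈ J <;> simp [h]
  rw [h, Matrix.diagonal_zero]

lemma IdxMat_add_compl {ι : Type*} [Fintype ι] [DecidableEq ι] (J : Finset ι) :
    IdxMat Jᶜ + IdxMat J = 1 := by
  simp only [IdxMat, Matrix.diagonal_add]
  have h : (fun j => (if j ∈ Jᶜ then (1:ℝ) else 0) + (if j ∈ J then (1:ℝ) else 0)) = fun _ => 1 := by
    funext j; by_cases h : j ∈ J <;> simp [h]
  rw [h, Matrix.diagonal_one]


/-- Key intertwining identity: `Π_J⁻¹ · V_Pᵀ · Π_J = V_{I_{Jᶜ}PI_{Jᶜ}}ᵀ · D_{I+I_{Jᶜ}PI_J} · V_{−I_JPI_J}`,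
together with the symmetry of `I_{Jᶜ}PI_{Jᶜ}` and `I_JPI_J` and the invertibility of
`I + I_{Jᶜ}PI_J`, whose inverse is `I − I_{Jᶜ}PI_J`. -/
theorem interchange_conjugation (d : ℕ) (hd : 0 < d)
    (P : Matrix (Fin d) (Fin d) ℝ) (hP : P.IsSymm) (J : Finset (Fin d)) :
    (IdxMat Jᶜ * P * IdxMat Jᶜ).IsSymm ∧
    (IdxMat J * P * IdxMat J).IsSymm ∧
    ((1 + IdxMat Jᶜ * P * IdxMat J) * (1 - IdxMat Jᶜ * P * IdxMat J) = 1 ∧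
      (1 - IdxMat Jᶜ * P * IdxMat J) * (1 + IdxMat Jᶜ * P * IdxMat J) = 1) ∧
    (PiMat J)⁻¹ * VTMat P * PiMat J =
      VTMat (IdxMat Jᶜ * P * IdxMat Jᶜ) *
        DMat (1 + IdxMat Jᶜ * P * IdxMat J) *
        VMat (-(IdxMat J * P * IdxMat J)) := by
  have hPt : Pᵀ = P := hP
  have hEt : (IdxMat (ι := Fin d) J)ᵀ = IdxMat J := IdxMat_transpose J
  have hFt : (IdxMat (ι := Fin d) Jᶜ)ᵀ = IdxMat Jᶜ := IdxMat_transpose Jᶜ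
  have hEE : IdxMat (ι := Fin d) J * IdxMat J = IdxMat J := IdxMat_mul_self J
  have hFF : IdxMat (ι := Fin d) Jᶜ * IdxMat Jᶜ = IdxMat Jᶜ := IdxMat_mul_self Jᶜ
  have hFE : IdxMat (ι := Fin d) Jᶜ * IdxMat J = 0 := IdxMat_compl_mul J
  have hEF : IdxMat (ι := Fin d) J * IdxMat Jᶜ = 0 := IdxMat_mul_compl J
  have hsum : IdxMat (ι := Fin d) Jᶜ + IdxMat J = 1 := IdxMat_add_compl J
  have zEF : ∀ X : Matrix (Fin d) (Fin d) ℝ, IdxMat J * (IdxMat Jᶜ * X) = 0 := fun X => by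
    rw [← mul_assoc, hEF, zero_mul]
  have zFE : ∀ X : Matrix (Fin d) (Fin d) ℝ, IdxMat Jᶜ * (IdxMat J * X) = 0 := fun X => by
    rw [← mul_assoc, hFE, zero_mul]
  have zEE : ∀ X : Matrix (Fin d) (Fin d) ℝ, IdxMat J * (IdxMat J * X) = IdxMat J * X :=
    fun X => by rw [← mul_assoc, hEE]
  have zFF : ∀ X : Matrix (Fin d) (Fin d) ℝ, IdxMat Jᶜ * (IdxMat Jᶜ * X) = IdxMat Jᶜ * X :=
    fun X => by rw [← mul_assoc, hFF]
  have hsymF : (IdxMat Jᶜ * P * IdxMat Jᶜ).IsSymm := by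
    rw [Matrix.IsSymm, Matrix.transpose_mul, Matrix.transpose_mul, hPt, hFt, mul_assoc]
  have hsymE : (IdxMat J * P * IdxMat J).IsSymm := by
    rw [Matrix.IsSymm, Matrix.transpose_mul, Matrix.transpose_mul, hPt, hEt, mul_assoc]
  have hN2 : (IdxMat Jᶜ * P * IdxMat J) * (IdxMat Jᶜ * P * IdxMat J) = 0 := by
    have h : (IdxMat Jᶜ * P * IdxMat J) * (IdxMat Jᶜ * P * IdxMat J)
        = IdxMat Jᶜ * P * (IdxMat J * IdxMat Jᶜ) * (P * IdxMat J) := by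
      simp only [mul_assoc]
    rw [h, hEF]; simp
  have hInv1 : (1 + IdxMat Jᶜ * P * IdxMat J) * (1 - IdxMat Jᶜ * P * IdxMat J) = 1 := by
    have h : (1 + IdxMat Jᶜ * P * IdxMat J) * (1 - IdxMat Jᶜ * P * IdxMat J)
        = 1 - (IdxMat Jᶜ * P * IdxMat J) * (IdxMat Jᶜ * P * IdxMat J) := by noncomm_ring
    rw [h, hN2, sub_zero]
  have hInv2 : (1 - IdxMat Jᶜ * P * IdxMat J) * (1 + IdxMat Jᶜ * P * IdxMat J) = 1 := by
    have h : (1 - IdxMat Jᶜ * P * IdxMat J) * (1 + IdxMat Jᶜ * P * IdxMat J)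
        = 1 - (IdxMat Jᶜ * P * IdxMat J) * (IdxMat Jᶜ * P * IdxMat J) := by noncomm_ring
    rw [h, hN2, sub_zero]
  refine ⟨hsymF, hsymE, ⟨hInv1, hInv2⟩, ?_⟩
  have hDinv : (1 + IdxMat Jᶜ * P * IdxMat J)⁻¹ = 1 - IdxMat Jᶜ * P * IdxMat J :=
    Matrix.inv_eq_right_inv hInv1
  have hDt : (1 + IdxMat Jᶜ * P * IdxMat J)ᵀ = 1 + IdxMat J * P * IdxMat Jᶜ := by
    rw [Matrix.transpose_add, Matrix.transpose_one, Matrix.transpose_mul,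
      Matrix.transpose_mul, hPt, hEt, hFt, mul_assoc]
  have hPiInv : (PiMat J)⁻¹
      = Matrix.fromBlocks (IdxMat Jᶜ) (-(IdxMat J)) (IdxMat J) (IdxMat Jᶜ) := by
    apply Matrix.inv_eq_right_inv
    rw [PiMat, Matrix.fromBlocks_multiply]
    simp only [neg_mul, mul_neg, hEE, hFF, hEF, hFE, neg_zero, neg_neg, add_zero, zero_add,
      sub_self]
    rw [hsum, add_comm (IdxMat (ι := Fin d) J) (IdxMat Jᶜ), hsum]
    exact Matrix.fromBlocks_one
  rw [hPiInv, VTMat, VTMat, VMat, DMat, PiMat, hDinv, hDt]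
  rw [Matrix.fromBlocks_multiply, Matrix.fromBlocks_multiply,
    Matrix.fromBlocks_multiply, Matrix.fromBlocks_multiply]
  have hsum1 : ∀ X : Matrix (Fin d) (Fin d) ℝ, IdxMat Jᶜ + (IdxMat J + X) = 1 + X :=
    fun X => by rw [← add_assoc, hsum]
  have hsum2 : ∀ X : Matrix (Fin d) (Fin d) ℝ, IdxMat J + (IdxMat Jᶜ + X) = 1 + X :=
    fun X => by rw [← add_assoc, add_comm (IdxMat (ι := Fin d) J) (IdxMat Jᶜ), hsum]
  simp only [mul_one, one_mul, mul_zero, zero_mul, add_zero, zero_add, mul_neg, neg_mul,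
    mul_add, add_mul, mul_sub, sub_mul, mul_assoc, zEF, zFE, zEE, zFF, hEE, hFF, hEF, hFE,
    hsum1, hsum2]
  rw [Matrix.fromBlocks_inj]
  refine ⟨?_, by abel, by abel, ?_⟩
  · rw [show (1 : Matrix (Fin d) (Fin d) ℝ) = IdxMat Jᶜ + IdxMat J from hsum.symm]; abel
  · rw [show (1 : Matrix (Fin d) (Fin d) ℝ) = IdxMat Jᶜ + IdxMat J from hsum.symm]; abel
end
end

section
/- Let d ≥ 1 and let 𝒜 ∈ Sp(2d,ℝ) (a 4d×4d symplectic matrix) have a Dopico–Johnson factorization 𝒜 = V_Q · D_L · V_Pᵀ · Π_J with Q, P ∈ Sym(2d,ℝ), L ∈ GL(2d,ℝ), J ⊆ {1,…,2d}. Write P in d×d blocks as P = [[P₁₁,P₁₂],[P₁₂ᵀ,P₂₂]], and write 𝒜 in d×d blocks (A_{ij})_{i,j=1}^4; set E_𝒜 = [[A₁₁,A₁₃],[A₂₁,A₂₃]]. Then E_𝒜 is invertible (i.e., 𝒜 is shift-invertible) if and only if P₁₂ is invertible. -/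
open Matrix

noncomputable section

/-- The `2d×2d` submatrix `E_𝒜 = [[A₁₁,A₁₃],[A₂₁,A₂₃]]` of a `4d×4d` matrix `𝒜` written in
`d×d` blocks `(A_{ij})_{i,j=1}^4`. -/
def EMat {d : ℕ} (A : Matrix ((Fin d ⊕ Fin d) ⊕ (Fin d ⊕ Fin d))
    ((Fin d ⊕ Fin d) ⊕ (Fin d ⊕ Fin d)) ℝ) :
    Matrix (Fin d ⊕ Fin d) (Fin d ⊕ Fin d) ℝ :=
  A.submatrix Sum.inl
    (Sum.elim (fun a : Fin d => Sum.inl (Sum.inl a)) (fun a : Fin d => Sum.inr (Sum.inl a)))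

variable {d : ℕ}

lemma EMat_fromBlocks' (B C D E : Matrix (Fin d ⊕ Fin d) (Fin d ⊕ Fin d) ℝ) :
    EMat (fromBlocks B C D E) = fromCols B.toCols₁ C.toCols₁ := by
  ext i j; cases j <;> rfl

lemma toCols₁_mul' {m n : Type*} [Fintype m] [Fintype n] [DecidableEq m]
    (A : Matrix n n ℝ) (B : Matrix n (m ⊕ m) ℝ) :
    (A * B).toCols₁ = A * B.toCols₁ := by
  ext i j; simp [toCols₁, mul_apply]

/-- A matrix `𝒜 ∈ Sp(2d,ℝ)` with Dopico–Johnson factorization `V_Q D_L V_Pᵀ Π_J`, where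
`P = [[P₁₁,P₁₂],[P₁₂ᵀ,P₂₂]]`, is shift-invertible (`E_𝒜` invertible) iff `P₁₂` is invertible. -/
theorem shift_invertible_iff (d : ℕ) (hd : 1 ≤ d)
    (A : Matrix ((Fin d ⊕ Fin d) ⊕ (Fin d ⊕ Fin d)) ((Fin d ⊕ Fin d) ⊕ (Fin d ⊕ Fin d)) ℝ)
    (hA : A ∈ Matrix.symplecticGroup (Fin d ⊕ Fin d) ℝ)
    (Q P L : Matrix (Fin d ⊕ Fin d) (Fin d ⊕ Fin d) ℝ)
    (hQ : Q.IsSymm) (hP : P.IsSymm) (hL : IsUnit L) (J : Finset (Fin d ⊕ Fin d))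
    (hfact : A = VMat Q * DMat L * VTMat P * PiMat J) :
    IsUnit (EMat A) ↔ IsUnit P.toBlocks₁₂ := by

  classical
  have hLd : IsUnit L.det := (Matrix.isUnit_iff_isUnit_det L).mp hL
  set t : Fin d → ℝ := fun a => if Sum.inl a ∈ J then 1 else 0 with ht
  set s : Fin d → ℝ := fun a => if Sum.inl a ∈ J then 0 else 1 with hs
  set U : Matrix (Fin d ⊕ Fin d) (Fin d) ℝ :=
    Matrix.of fun i a => if i = Sum.inl a then (1 : ℝ) else 0 with hU
  set W : Matrix (Fin d ⊕ Fin d) (Fin d) ℝ := P.toCols₁ with hW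
  set G : Matrix (Fin d ⊕ Fin d) (Fin d ⊕ Fin d) ℝ :=
    fromBlocks (diagonal s) (diagonal t) (-(diagonal t)) (diagonal s) with hG
  set G' : Matrix (Fin d ⊕ Fin d) (Fin d ⊕ Fin d) ℝ :=
    fromBlocks (diagonal s) (-(diagonal t)) (diagonal t) (diagonal s) with hG'
  -- diagonal arithmetic
  have h1 : diagonal s * diagonal s + diagonal t * diagonal t = (1 : Matrix (Fin d) (Fin d) ℝ) := by
    ext i j
    simp only [diagonal_mul_diagonal, Matrix.add_apply, diagonal_apply, Pi.mul_apply, one_apply]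
    by_cases hij : i = j
    · subst hij; by_cases h : Sum.inl i ∈ J <;> simp [ht, hs, h]
    · simp [hij]
  have h0 : diagonal s * diagonal t = (0 : Matrix (Fin d) (Fin d) ℝ) := by
    ext i j
    simp only [diagonal_mul_diagonal, diagonal_apply, Pi.mul_apply, Matrix.zero_apply]
    by_cases hij : i = j
    · subst hij; by_cases h : Sum.inl i ∈ J <;> simp [ht, hs, h]
    · simp [hij]
  have h0' : diagonal t * diagonal s = (0 : Matrix (Fin d) (Fin d) ℝ) := by
    ext i j
    simp only [diagonal_mul_diagonal, diagonal_apply, Pi.mul_apply, Matrix.zero_apply]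
    by_cases hij : i = j
    · subst hij; by_cases h : Sum.inl i ∈ J <;> simp [ht, hs, h]
    · simp [hij]
  have hGG' : G * G' = 1 := by
    rw [hG, hG', ← fromBlocks_one]
    simp only [fromBlocks_multiply, Matrix.mul_neg, Matrix.neg_mul, neg_neg, h0, h0', h1,
      neg_zero, add_zero, zero_add]
    rw [add_comm (diagonal t * diagonal t) (diagonal s * diagonal s), h1]
  have hG'G : G' * G = 1 := by
    rw [hG, hG', ← fromBlocks_one]
    simp only [fromBlocks_multiply, Matrix.mul_neg, Matrix.neg_mul, neg_neg, h0, h0', h1,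
      neg_zero, add_zero, zero_add]
    rw [add_comm (diagonal t * diagonal t) (diagonal s * diagonal s), h1]
  have hGunit : IsUnit G := ⟨⟨G, G', hGG', hG'G⟩, rfl⟩
  have hGdet : IsUnit G.det := (Matrix.isUnit_iff_isUnit_det G).mp hGunit
  -- the factorization in block form
  have hfact' : A = fromBlocks (L⁻¹ * (IdxMat Jᶜ - P * IdxMat J)) (L⁻¹ * (IdxMat J + P * IdxMat Jᶜ))
      (Q * (L⁻¹ * (IdxMat Jᶜ - P * IdxMat J)) - Lᵀ * IdxMat J)
      (Q * (L⁻¹ * (IdxMat J + P * IdxMat Jᶜ)) + Lᵀ * IdxMat Jᶜ) := by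
    rw [hfact]
    show fromBlocks 1 0 Q 1 * fromBlocks L⁻¹ 0 0 Lᵀ * fromBlocks 1 P 0 1 *
      fromBlocks (IdxMat Jᶜ) (IdxMat J) (-(IdxMat J)) (IdxMat Jᶜ) = _
    simp only [fromBlocks_multiply, Matrix.one_mul, Matrix.mul_one, Matrix.zero_mul,
      Matrix.mul_zero, add_zero, zero_add, Matrix.mul_neg, Matrix.neg_mul, Matrix.mul_add,
      Matrix.mul_sub, Matrix.add_mul, neg_add, Matrix.mul_assoc, sub_eq_add_neg, add_assoc]
  -- identify the columns
  have hN1 : (IdxMat Jᶜ - P * IdxMat J : Matrix _ _ ℝ).toCols₁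
      = U * diagonal s + W * -(diagonal t) := by
    ext i a
    simp only [toCols₁, of_apply, Matrix.sub_apply, Matrix.add_apply, Matrix.mul_neg, Matrix.neg_apply,
      IdxMat, Matrix.mul_diagonal, mul_diagonal, hU, hW, ht, hs, Finset.mem_compl,
      diagonal_apply, toCols₁_apply]
    by_cases hi : i = Sum.inl a <;> by_cases hj : Sum.inl a ∈ J <;> simp [hi, hj]
  have hN2 : (IdxMat J + P * IdxMat Jᶜ : Matrix _ _ ℝ).toCols₁
      = U * diagonal t + W * diagonal s := by
    ext i a
    simp only [toCols₁, of_apply, Matrix.add_apply, IdxMat, mul_diagonal, hU, hW, ht, hs,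
      Finset.mem_compl, diagonal_apply, toCols₁_apply]
    by_cases hi : i = Sum.inl a <;> by_cases hj : Sum.inl a ∈ J <;> simp [hi, hj]
  -- assemble
  have hE : EMat A = L⁻¹ * (fromCols U W * G) := by
    rw [hfact', EMat_fromBlocks', toCols₁_mul', toCols₁_mul', ← Matrix.mul_fromCols,
      hN1, hN2, hG, fromCols_mul_fromBlocks]
  have hUW : fromCols U W = fromBlocks 1 P.toBlocks₁₁ 0 P.toBlocks₂₁ := by
    ext i j
    cases i <;> cases j <;>
      simp [hU, hW, fromCols, fromBlocks, toCols₁, toBlocks₁₁, toBlocks₂₁, one_apply]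
  have hP21 : P.toBlocks₂₁ = (P.toBlocks₁₂)ᵀ := by
    ext i j
    simp only [toBlocks₂₁, toBlocks₁₂, transpose_apply, of_apply]
    conv_lhs => rw [← hP]
    rfl
  rw [Matrix.isUnit_iff_isUnit_det, hE, det_mul, det_mul, hUW, det_fromBlocks_zero₂₁,
    det_one, one_mul, hP21, det_transpose]
  have hLinv : IsUnit (L⁻¹).det := Matrix.isUnit_nonsing_inv_det L hLd
  rw [IsUnit.mul_iff, IsUnit.mul_iff]
  simp only [hLinv, hGdet, true_and, and_true]
  exact (Matrix.isUnit_iff_isUnit_det _).symm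

end
end

section
/- The set Shp(2d,ℝ) of shift-invertible symplectic matrices, Shp(2d,ℝ) = {𝒜 ∈ Sp(2d,ℝ) : E_𝒜 is invertible}, is dense in Sp(2d,ℝ) with respect to the topology of entrywise convergence of 4d×4d real matrices. -/
open Matrix

noncomputable section

section helpers
set_option linter.unusedSectionVars false
set_option maxHeartbeats 1000000
variable {m k : Type*} [Fintype m] [DecidableEq m] [Fintype k] [DecidableEq k]

lemma gram_isUnit (Q : Matrix m k ℝ) (hQ : ∀ u, Q.mulVec u = 0 → u = 0) :
    IsUnit (Qᵀ * Q) := by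
  rw [← Matrix.mulVec_injective_iff_isUnit]
  have h : ∀ u, (Qᵀ * Q).mulVec u = 0 → u = 0 := by
    intro u hu
    have h1 : u ⬝ᵥ (Qᵀ * Q).mulVec u = Q.mulVec u ⬝ᵥ Q.mulVec u := by
      rw [← Matrix.mulVec_mulVec, Matrix.dotProduct_mulVec, Matrix.vecMul_transpose]
    rw [hu] at h1
    simp only [dotProduct_zero] at h1
    exact hQ u (dotProduct_self_eq_zero.mp h1.symm)
  intro u w huw
  have : (Qᵀ * Q).mulVec (u - w) = 0 := by rw [Matrix.mulVec_sub, huw, sub_self]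
  exact sub_eq_zero.mp (h _ this)

lemma dot_mulVec_mulVec_eq_sum (x : m → ℝ) (Q : Matrix m m ℝ) (P : Matrix m k ℝ) (u : k → ℝ) :
    x ⬝ᵥ Q.mulVec (P.mulVec u) = ∑ b, (x ⬝ᵥ Q.mulVec (fun i => P i b)) * u b := by
  rw [Matrix.dotProduct_mulVec, Matrix.dotProduct_mulVec]
  simp only [Matrix.dotProduct_mulVec]
  rfl

lemma rank_jump (M N : Matrix m m ℝ) (v φ : m → ℝ) (hv : v ≠ 0) (hMv : M.mulVec v = 0)
    (hφM : Mᵀ.mulVec φ = 0) (hNv : φ ⬝ᵥ N.mulVec v ≠ 0) :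
    ∃ t : ℝ, Module.finrank ℝ (LinearMap.ker (M + t • N).mulVecLin)
      < Module.finrank ℝ (LinearMap.ker M.mulVecLin) := by
  classical
  set K := LinearMap.ker M.mulVecLin with hK
  obtain ⟨U, hU⟩ := Submodule.exists_isCompl K
  set m' := Module.finrank ℝ U with hm'
  let b : Module.Basis (Fin m') ℝ U := Module.finBasis ℝ U
  let c : Fin m' ⊕ Unit → (m → ℝ) := Sum.elim (fun j => (b j : m → ℝ)) (fun _ => v)
  let P : Matrix m (Fin m' ⊕ Unit) ℝ := Matrix.of fun i a => c a i
  let B : Matrix m (Fin m') ℝ := Matrix.of fun i j => (b j : m → ℝ) i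
  let r : Fin m' ⊕ Unit → (m → ℝ) := Sum.elim (fun i => M.mulVec (c (Sum.inl i))) (fun _ => φ)
  let G : ℝ → Matrix (Fin m' ⊕ Unit) (Fin m' ⊕ Unit) ℝ := fun t => Matrix.of fun a b' =>
    r a ⬝ᵥ (Sum.elim (fun _ : Fin m' => M + t • N) (fun _ : Unit => N) a).mulVec (c b')
  -- injectivity of M * B
  have hMB : ∀ u, (M * B).mulVec u = 0 → u = 0 := by
    intro u hu
    set z := B.mulVec u with hzdef
    have hz : z = ((∑ j, u j • b j : U) : m → ℝ) := by
      funext i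
      simp only [hzdef, Matrix.mulVec, dotProduct, B, Matrix.of_apply]
      rw [Submodule.coe_sum]
      simp [Finset.sum_apply, mul_comm]
    have hzK : z ∈ K := by
      rw [hK, LinearMap.mem_ker, Matrix.mulVecLin_apply, hzdef, Matrix.mulVec_mulVec]
      exact hu
    have hzU : z ∈ U := by rw [hz]; exact (∑ j, u j • b j : U).2
    have hz0 : z = 0 := by
      have : z ∈ K ⊓ U := ⟨hzK, hzU⟩
      rwa [hU.inf_eq_bot, Submodule.mem_bot] at this
    have hsum : (∑ j, u j • b j : U) = 0 := by
      apply Subtype.ext; rw [← hz, hz0]; rfl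
    funext j
    exact Fintype.linearIndependent_iff.mp b.linearIndependent u hsum j
  -- G 0 in block form
  have hG0 : G 0 = Matrix.fromBlocks ((M * B)ᵀ * (M * B)) 0
      (Matrix.of fun (_ : Unit) j => φ ⬝ᵥ N.mulVec (c (Sum.inl j)))
      (Matrix.of fun (_ : Unit) (_ : Unit) => φ ⬝ᵥ N.mulVec v) := by
    ext a b'
    cases a with
    | inl i =>
      cases b' with
      | inl j =>
        simp only [G, Matrix.of_apply, Sum.elim_inl, zero_smul, add_zero,
          Matrix.fromBlocks_apply₁₁, r]
        simp only [Matrix.mul_apply, Matrix.transpose_apply, Matrix.mulVec, dotProduct,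
          B, Matrix.of_apply, c, Sum.elim_inl]
      | inr j =>
        simp only [G, Matrix.of_apply, Sum.elim_inl, zero_smul, add_zero,
          Matrix.fromBlocks_apply₁₂, c, Matrix.zero_apply]
        rw [show (Sum.elim (fun j => (b j : m → ℝ)) (fun _ => v) (Sum.inr j)) = v from rfl, hMv]
        simp
    | inr u =>
      cases b' with
      | inl j => rfl
      | inr j => rfl
  have hdet0 : (G 0).det ≠ 0 := by
    rw [hG0, Matrix.det_fromBlocks_zero₁₂]
    refine mul_ne_zero ?_ ?_
    · have := (Matrix.isUnit_iff_isUnit_det _).mp (gram_isUnit (M * B) hMB)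
      exact this.ne_zero
    · rw [Matrix.det_unique]; simpa using hNv
  -- continuity
  have hGcont : Continuous fun t => (G t).det := by
    apply Continuous.matrix_det
    apply continuous_matrix
    intro a b'
    cases a with
    | inl i =>
      have hform : ∀ t : ℝ, G t (Sum.inl i) b'
          = r (Sum.inl i) ⬝ᵥ M.mulVec (c b') + t * (r (Sum.inl i) ⬝ᵥ N.mulVec (c b')) := by
        intro t
        simp [G, Matrix.add_mulVec, Matrix.smul_mulVec, dotProduct_add,
          dotProduct_smul, smul_eq_mul]
      exact Continuous.congr (by continuity) fun t => (hform t).symm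
    | inr u =>
      have : (fun t => G t (Sum.inr u) b') = fun _ => φ ⬝ᵥ N.mulVec (c b') := rfl
      rw [this]; exact continuous_const
  -- find t ≠ 0 with det (G t) ≠ 0
  have hev : ∀ᶠ t in nhdsWithin (0:ℝ) {(0:ℝ)}ᶜ, (G t).det ≠ 0 :=
    nhdsWithin_le_nhds (hGcont.continuousAt.eventually_ne hdet0)
  have hne : ∀ᶠ t in nhdsWithin (0:ℝ) {(0:ℝ)}ᶜ, t ≠ 0 := by
    filter_upwards [self_mem_nhdsWithin] with t ht
    exact ht
  obtain ⟨t, hdet, ht0⟩ := (hev.and hne).exists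
  refine ⟨t, ?_⟩
  -- injectivity of (M + t•N) * P
  have hinj : ∀ u, ((M + t • N) * P).mulVec u = 0 → u = 0 := by
    intro u hu
    set z := P.mulVec u with hzdef
    have hz : (M + t • N).mulVec z = 0 := by rw [hzdef, Matrix.mulVec_mulVec]; exact hu
    have hφMz : φ ⬝ᵥ M.mulVec z = 0 := by
      rw [Matrix.dotProduct_mulVec, ← Matrix.mulVec_transpose, hφM]
      simp
    have hNz : φ ⬝ᵥ N.mulVec z = 0 := by
      have h1 : φ ⬝ᵥ (M + t • N).mulVec z = 0 := by rw [hz]; simp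
      rw [Matrix.add_mulVec, Matrix.smul_mulVec, dotProduct_add,
        dotProduct_smul, hφMz, zero_add, smul_eq_mul] at h1
      exact (mul_eq_zero.mp h1).resolve_left ht0
    have hGu : (G t).mulVec u = 0 := by
      funext a
      have key : (G t).mulVec u a
          = r a ⬝ᵥ (Sum.elim (fun _ : Fin m' => M + t • N) (fun _ : Unit => N) a).mulVec z := by
        rw [hzdef, dot_mulVec_mulVec_eq_sum]
        simp only [Matrix.mulVec, dotProduct, G, Matrix.of_apply]
        rfl
      cases a with
      | inl i => rw [key]; simp only [Sum.elim_inl, hz]; simp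
      | inr w => rw [key]; simpa [r] using hNz
    have hGinj := Matrix.mulVec_injective_iff_isUnit.mpr
      ((Matrix.isUnit_iff_isUnit_det _).mpr (isUnit_iff_ne_zero.mpr hdet))
    apply hGinj
    rw [hGu, Matrix.mulVec_zero]
  -- rank bound
  have hinj' : Function.Injective ((M + t • N) * P).mulVecLin := by
    rw [← LinearMap.ker_eq_bot, LinearMap.ker_eq_bot']
    intro u hu
    exact hinj u (by rwa [Matrix.mulVecLin_apply] at hu)
  have hrange : m' + 1 ≤ Module.finrank ℝ (LinearMap.range (M + t • N).mulVecLin) := by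
    have h1 := LinearMap.finrank_range_of_inj hinj'
    rw [Module.finrank_fintype_fun_eq_card, Fintype.card_sum, Fintype.card_fin,
      Fintype.card_unit] at h1
    rw [← h1, Matrix.mulVecLin_mul]
    exact Submodule.finrank_mono (LinearMap.range_comp_le_range _ _)
  have hrn := LinearMap.finrank_range_add_finrank_ker (M + t • N).mulVecLin
  rw [Module.finrank_fintype_fun_eq_card] at hrn
  have hKU := Submodule.finrank_add_eq_of_isCompl hU
  rw [Module.finrank_fintype_fun_eq_card] at hKU
  have hvK : v ∈ K := by rw [hK, LinearMap.mem_ker, Matrix.mulVecLin_apply]; exact hMv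
  have hKpos : 0 < Module.finrank ℝ K := by
    rcases Nat.eq_zero_or_pos (Module.finrank ℝ K) with h | h
    · exfalso
      have : K = ⊥ := Submodule.finrank_eq_zero.mp h
      rw [this, Submodule.mem_bot] at hvK
      exact hv hvK
    · exact h
  omega

end helpers

section claimT
set_option linter.unusedSectionVars false
variable {m : Type*} [Fintype m] [DecidableEq m]

lemma vecMulVec_mulVec' (x : m → ℝ) (y : m → ℝ) (z : m → ℝ) :
    (vecMulVec x y).mulVec z = (y ⬝ᵥ z) • x := by
  ext i
  simp [vecMulVec, Matrix.mulVec, dotProduct, Finset.mul_sum, Pi.smul_apply,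
    smul_eq_mul, Finset.sum_mul, mul_comm, mul_assoc, mul_left_comm]

lemma vecMulVec_transpose' (x y : m → ℝ) : (vecMulVec x y)ᵀ = vecMulVec y x := by
  ext i j; simp [vecMulVec, mul_comm]

lemma exists_symm_isUnit (X Ξ : Matrix m m ℝ)
    (h : ∀ v : m → ℝ, X.mulVec v = 0 → Ξ.mulVec v = 0 → v = 0) :
    ∃ C : Matrix m m ℝ, C.IsSymm ∧ IsUnit (X + C * Ξ) := by
  classical
  by_contra hcon
  push_neg at hcon
  set S : Set ℕ := {n | ∃ C : Matrix m m ℝ,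
    C.IsSymm ∧ Module.finrank ℝ (LinearMap.ker (X + C * Ξ).mulVecLin) = n} with hS
  have hne : S.Nonempty := ⟨_, 0, Matrix.isSymm_zero, rfl⟩
  obtain ⟨C, hCsymm, hCk⟩ := Nat.sInf_mem hne
  set M := X + C * Ξ with hM
  -- the kernel is nontrivial
  have hker : LinearMap.ker M.mulVecLin ≠ ⊥ := by
    intro hbot
    apply hcon C hCsymm
    rw [← Matrix.mulVec_injective_iff_isUnit]
    intro u w huw
    have : M.mulVec (u - w) = 0 := by rw [Matrix.mulVec_sub, huw, sub_self]
    have := LinearMap.ker_eq_bot'.mp hbot (u - w) (by rwa [Matrix.mulVecLin_apply])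
    exact sub_eq_zero.mp this
  obtain ⟨⟨v, hvK⟩, hvne⟩ := Submodule.nonzero_mem_of_bot_lt (bot_lt_iff_ne_bot.mpr hker)
  have hv : v ≠ 0 := fun h' => hvne (Subtype.ext h')
  have hMv : M.mulVec v = 0 := by rwa [LinearMap.mem_ker, Matrix.mulVecLin_apply] at hvK
  -- Ξ v ≠ 0
  have hΞv : Ξ.mulVec v ≠ 0 := by
    intro hΞ
    apply hv
    apply h v ?_ hΞ
    have hCΞ : (C * Ξ).mulVec v = 0 := by rw [← Matrix.mulVec_mulVec, hΞ, Matrix.mulVec_zero]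
    have h2 : M.mulVec v = X.mulVec v + (C * Ξ).mulVec v := by
      rw [hM, Matrix.add_mulVec]
    rw [hMv, hCΞ, add_zero] at h2
    exact h2.symm
  -- cokernel is nontrivial: get φ
  have hrkT : LinearMap.ker Mᵀ.mulVecLin ≠ ⊥ := by
    intro hbot
    have hinj : Function.Injective Mᵀ.mulVecLin := by
      rw [← LinearMap.ker_eq_bot]; exact hbot
    have h1 := LinearMap.finrank_range_of_inj hinj
    -- rank Mᵀ = card m, so rank M = card m, so ker M = ⊥
    have h2 : Mᵀ.rank = Fintype.card m := by
      rw [Matrix.rank, h1, Module.finrank_fintype_fun_eq_card]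
    have h3 : M.rank = Fintype.card m := by rw [← Matrix.rank_transpose, h2]
    have h4 := LinearMap.finrank_range_add_finrank_ker M.mulVecLin
    rw [Module.finrank_fintype_fun_eq_card] at h4
    have h5 : Module.finrank ℝ (LinearMap.ker M.mulVecLin) = 0 := by
      have : M.rank = Module.finrank ℝ (LinearMap.range M.mulVecLin) := rfl
      omega
    exact hker (Submodule.finrank_eq_zero.mp h5)
  obtain ⟨⟨φ, hφK⟩, hφne⟩ := Submodule.nonzero_mem_of_bot_lt (bot_lt_iff_ne_bot.mpr hrkT)
  have hφ : φ ≠ 0 := fun h' => hφne (Subtype.ext h')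
  have hφM : Mᵀ.mulVec φ = 0 := by rwa [LinearMap.mem_ker, Matrix.mulVecLin_apply] at hφK
  -- the perturbation direction
  set w := Ξ.mulVec v with hw
  set C₁ := vecMulVec φ w + vecMulVec w φ with hC₁
  have hC₁symm : C₁.IsSymm := by
    unfold Matrix.IsSymm
    rw [hC₁, Matrix.transpose_add, vecMulVec_transpose', vecMulVec_transpose', add_comm]
  have hNv : φ ⬝ᵥ (C₁ * Ξ).mulVec v ≠ 0 := by
    have hexp : (C₁ * Ξ).mulVec v = (w ⬝ᵥ w) • φ + (φ ⬝ᵥ w) • w := by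
      rw [← Matrix.mulVec_mulVec, ← hw, hC₁, Matrix.add_mulVec, vecMulVec_mulVec',
        vecMulVec_mulVec']
    rw [hexp, dotProduct_add, dotProduct_smul, dotProduct_smul]
    have hww : (0:ℝ) ≤ w ⬝ᵥ w := by
      rw [dotProduct]
      exact Finset.sum_nonneg fun i _ => mul_self_nonneg _
    have hφφ : (0:ℝ) ≤ φ ⬝ᵥ φ := by
      rw [dotProduct]
      exact Finset.sum_nonneg fun i _ => mul_self_nonneg _
    have h1 : 0 < w ⬝ᵥ w :=
      hww.lt_of_ne' fun h' => hΞv (dotProduct_self_eq_zero.mp h')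
    have h2 : 0 < φ ⬝ᵥ φ :=
      hφφ.lt_of_ne' fun h' => hφ (dotProduct_self_eq_zero.mp h')
    have hpos : 0 < (w ⬝ᵥ w) * (φ ⬝ᵥ φ) + (φ ⬝ᵥ w) * (φ ⬝ᵥ w) :=
      add_pos_of_pos_of_nonneg (mul_pos h1 h2) (mul_self_nonneg _)
    rw [smul_eq_mul, smul_eq_mul]
    exact hpos.ne'
  obtain ⟨t, hlt⟩ := rank_jump M (C₁ * Ξ) v φ hv hMv hφM hNv
  -- contradiction with minimality
  have hnew : X + (C + t • C₁) * Ξ = M + t • (C₁ * Ξ) := by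
    rw [hM, Matrix.add_mul, Matrix.smul_mul, add_assoc]
  have hmem : Module.finrank ℝ (LinearMap.ker (X + (C + t • C₁) * Ξ).mulVecLin) ∈ S := by
    refine ⟨C + t • C₁, ?_, rfl⟩
    unfold Matrix.IsSymm
    rw [Matrix.transpose_add, Matrix.transpose_smul, hCsymm.eq, hC₁symm.eq]
  have hle := Nat.sInf_le hmem
  rw [hnew] at hle
  omega

end claimT


/-- The set of shift-invertible symplectic matrices is dense in `Sp(2d,ℝ)` for the topology of
entrywise convergence. -/
theorem shift_invertible_dense (d : ℕ) (hd : 1 ≤ d)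
    (A : Matrix ((Fin d ⊕ Fin d) ⊕ (Fin d ⊕ Fin d)) ((Fin d ⊕ Fin d) ⊕ (Fin d ⊕ Fin d)) ℝ)
    (hA : A ∈ Matrix.symplecticGroup (Fin d ⊕ Fin d) ℝ) :
    A ∈ closure {B : Matrix ((Fin d ⊕ Fin d) ⊕ (Fin d ⊕ Fin d))
        ((Fin d ⊕ Fin d) ⊕ (Fin d ⊕ Fin d)) ℝ |
      B ∈ Matrix.symplecticGroup (Fin d ⊕ Fin d) ℝ ∧ IsUnit (EMat B)} := by
  classical
  set σ : (Fin d ⊕ Fin d) → ((Fin d ⊕ Fin d) ⊕ (Fin d ⊕ Fin d)) :=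
    Sum.elim (fun a : Fin d => Sum.inl (Sum.inl a)) (fun a : Fin d => Sum.inr (Sum.inl a))
    with hσ
  set X := A.submatrix Sum.inl σ with hX
  set Ξ := A.submatrix Sum.inr σ with hΞ
  have hAunit : IsUnit A :=
    (Matrix.isUnit_iff_isUnit_det A).mpr (SymplecticGroup.symplectic_det hA)
  have hAinj : Function.Injective A.mulVec := Matrix.mulVec_injective_iff_isUnit.mpr hAunit
  -- kernel hypothesis
  have hyp : ∀ v : (Fin d ⊕ Fin d) → ℝ, X.mulVec v = 0 → Ξ.mulVec v = 0 → v = 0 := by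
    intro v hXv hΞv
    set w : ((Fin d ⊕ Fin d) ⊕ (Fin d ⊕ Fin d)) → ℝ :=
      Sum.elim (Sum.elim (fun a => v (Sum.inl a)) (fun _ => 0))
        (Sum.elim (fun a => v (Sum.inr a)) (fun _ => 0)) with hwdef
    have key : ∀ p, A.mulVec w p
        = Sum.elim (fun i => X.mulVec v i) (fun i => Ξ.mulVec v i) p := by
      intro p
      cases p with
      | inl i =>
        simp [Matrix.mulVec, dotProduct, Fintype.sum_sum_type, hwdef,
          hX, Matrix.submatrix_apply, hσ]
      | inr i =>
        simp [Matrix.mulVec, dotProduct, Fintype.sum_sum_type, hwdef,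
          hΞ, Matrix.submatrix_apply, hσ]
    have hAw : A.mulVec w = 0 := by
      funext p
      rw [key]
      cases p with
      | inl i => simp [hXv]
      | inr i => simp [hΞv]
    have hw0 : w = 0 := hAinj (by rw [hAw, Matrix.mulVec_zero])
    funext j
    cases j with
    | inl a => simpa [hwdef] using congrFun hw0 (Sum.inl (Sum.inl a))
    | inr a => simpa [hwdef] using congrFun hw0 (Sum.inr (Sum.inl a))
  obtain ⟨C, hCsymm, hCunit⟩ := exists_symm_isUnit X Ξ hyp
  -- the shear family
  set NS : ℝ → Matrix ((Fin d ⊕ Fin d) ⊕ (Fin d ⊕ Fin d))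
      ((Fin d ⊕ Fin d) ⊕ (Fin d ⊕ Fin d)) ℝ :=
    fun t => Matrix.fromBlocks 1 (t • C) 0 1 with hNS
  have hNSsymp : ∀ t, NS t ∈ Matrix.symplecticGroup (Fin d ⊕ Fin d) ℝ := by
    intro t
    rw [SymplecticGroup.mem_iff]
    have hCT : (t • C)ᵀ = t • C := by rw [Matrix.transpose_smul, hCsymm.eq]
    rw [hNS, Matrix.J, Matrix.fromBlocks_transpose, Matrix.fromBlocks_multiply,
      Matrix.fromBlocks_multiply, hCT]
    congr 1 <;> simp
  -- EMat of the perturbed matrix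
  have hEMat : ∀ t, EMat (NS t * A) = X + t • (C * Ξ) := by
    intro t
    have : EMat (NS t * A) = (NS t * A).submatrix Sum.inl σ := rfl
    rw [this]
    ext i j
    rw [Matrix.submatrix_apply, Matrix.mul_apply]
    rw [Fintype.sum_sum_type]
    have h1 : ∑ x : Fin d ⊕ Fin d, NS t (Sum.inl i) (Sum.inl x) * A (Sum.inl x) (σ j)
        = A (Sum.inl i) (σ j) := by
      rw [hNS]
      simp [Matrix.fromBlocks_apply₁₁, Matrix.one_apply, ite_mul, zero_mul]
    have h2 : ∑ x : Fin d ⊕ Fin d, NS t (Sum.inl i) (Sum.inr x) * A (Sum.inr x) (σ j)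
        = t * (C * Ξ) i j := by
      rw [hNS]
      simp only [Matrix.fromBlocks_apply₁₂, Matrix.smul_apply, smul_eq_mul,
        Matrix.mul_apply, Finset.mul_sum, hΞ, Matrix.submatrix_apply, mul_assoc]
    rw [h1, h2, Matrix.add_apply, Matrix.smul_apply, smul_eq_mul, hX, Matrix.submatrix_apply]
  -- the determinant polynomial
  set q : Polynomial ℝ :=
    (Matrix.of fun i j => Polynomial.C (X i j) + Polynomial.X * Polynomial.C ((C * Ξ) i j)
      : Matrix (Fin d ⊕ Fin d) (Fin d ⊕ Fin d) (Polynomial ℝ)).det with hq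
  have hqeval : ∀ t : ℝ, q.eval t = (X + t • (C * Ξ)).det := by
    intro t
    have : q.eval t = (Polynomial.evalRingHom t) q := rfl
    rw [this, hq, RingHom.map_det]
    congr 1
    ext i j
    rw [RingHom.mapMatrix_apply, Matrix.map_apply, Matrix.of_apply]
    rw [map_add, _root_.map_mul]
    simp only [Polynomial.coe_evalRingHom, Polynomial.eval_C, Polynomial.eval_X]
    rw [Matrix.add_apply, Matrix.smul_apply, smul_eq_mul]
  have hq0 : q ≠ 0 := by
    intro h0
    have h1 := hqeval 1
    rw [h0, one_smul] at h1
    have hdet := (Matrix.isUnit_iff_isUnit_det _).mp hCunit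
    rw [← h1] at hdet
    simp at hdet
  have hroots := Polynomial.finite_setOf_isRoot hq0
  -- choose small parameters avoiding the roots
  have hchoice : ∀ k : ℕ, ∃ t : ℝ, t ∈ Set.Ioo (0:ℝ) (1/(k+1)) ∧ ¬ q.IsRoot t := by
    intro k
    have hIoo : (Set.Ioo (0:ℝ) (1/(k+1))).Infinite := Set.Ioo_infinite (by positivity)
    obtain ⟨t, ht⟩ := (hIoo.diff hroots).nonempty
    exact ⟨t, ht.1, ht.2⟩
  choose ts hts hnroot using hchoice
  have hts0 : Filter.Tendsto ts Filter.atTop (nhds 0) := by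
    apply tendsto_of_tendsto_of_tendsto_of_le_of_le tendsto_const_nhds
      tendsto_one_div_add_atTop_nhds_zero_nat
    · intro k; exact (hts k).1.le
    · intro k; exact (hts k).2.le
  -- continuity of the path
  have hdecomp : ∀ t : ℝ, NS t * A = A + t • (Matrix.fromBlocks 0 C 0 0 * A) := by
    intro t
    have hsplit : NS t = 1 + t • Matrix.fromBlocks 0 C 0 0 := by
      ext p p'
      cases p with
      | inl i =>
        cases p' with
        | inl j =>
          simp [hNS, Matrix.one_apply, Matrix.add_apply, Matrix.smul_apply]
        | inr j =>
          simp [hNS, Matrix.one_apply, Matrix.add_apply, Matrix.smul_apply]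
      | inr i =>
        cases p' with
        | inl j =>
          simp [hNS, Matrix.one_apply, Matrix.add_apply, Matrix.smul_apply]
        | inr j =>
          simp [hNS, Matrix.one_apply, Matrix.add_apply, Matrix.smul_apply]
    rw [hsplit, Matrix.add_mul, Matrix.one_mul, Matrix.smul_mul]
  have hcont : Continuous fun t : ℝ => NS t * A := by
    simp only [hdecomp]
    exact continuous_const.add (continuous_id.smul continuous_const)
  have htends : Filter.Tendsto (fun k => NS (ts k) * A) Filter.atTop (nhds A) := by
    have h1 := (hcont.tendsto 0).comp hts0
    have h2 : NS 0 * A = A := by rw [hdecomp, zero_smul, add_zero]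
    rw [h2] at h1
    exact h1
  -- membership in the set
  have hmem : ∀ k, NS (ts k) * A ∈ {B : Matrix ((Fin d ⊕ Fin d) ⊕ (Fin d ⊕ Fin d))
      ((Fin d ⊕ Fin d) ⊕ (Fin d ⊕ Fin d)) ℝ |
      B ∈ Matrix.symplecticGroup (Fin d ⊕ Fin d) ℝ ∧ IsUnit (EMat B)} := by
    intro k
    refine ⟨mul_mem (hNSsymp _) hA, ?_⟩
    rw [hEMat, Matrix.isUnit_iff_isUnit_det, isUnit_iff_ne_zero, ← hqeval]
    exact hnroot k
  exact mem_closure_of_tendsto htends (Filter.Eventually.of_forall hmem)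

end
end

section
/- For every 𝒜 ∈ Sp(2d,ℝ) there exist Ξ ∈ Sp(2d,ℝ) free (i.e., the upper-right 2d×2d block of Ξ is invertible) and 𝒜' ∈ Sp(2d,ℝ) shift-invertible (i.e., E_{𝒜'} is invertible) such that 𝒜 = Ξ · 𝒜'. -/
open Matrix Polynomial

noncomputable section

namespace FreeShiftAux

variable {m : Type*} [Fintype m] [DecidableEq m]

lemma exists_ne_zero_eval_ne_zero {p : ℝ[X]} (hp : p ≠ 0) :
    ∃ t : ℝ, t ≠ 0 ∧ p.eval t ≠ 0 := by
  obtain ⟨t, ht⟩ :=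
    (((Polynomial.finite_setOf_isRoot hp).union (Set.finite_singleton 0)).infinite_compl).nonempty
  refine ⟨t, ?_, ?_⟩
  · intro h; exact ht (Or.inr (by simp [h]))
  · intro h; exact ht (Or.inl h)

lemma exists_real_det_ne_zero (P Q : Matrix m m ℝ) (z : ℂ)
    (hz : (Q.map (algebraMap ℝ ℂ) + z • P.map (algebraMap ℝ ℂ)).det ≠ 0) :
    ∃ t : ℝ, t ≠ 0 ∧ (Q + t • P).det ≠ 0 := by
  set Mp : Matrix m m ℝ[X] := Q.map Polynomial.C + (X : ℝ[X]) • P.map Polynomial.C with hMp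
  have hmapz : Mp.map (Polynomial.aeval z) = Q.map (algebraMap ℝ ℂ) + z • P.map (algebraMap ℝ ℂ) := by
    ext i j
    simp [hMp, Matrix.map_apply, Matrix.add_apply, Matrix.smul_apply, smul_eq_mul]
    ring
  have hp : Mp.det ≠ 0 := by
    intro h
    apply hz
    have hd := RingHom.map_det ((Polynomial.aeval z : ℝ[X] →ₐ[ℝ] ℂ) : ℝ[X] →+* ℂ) Mp
    rw [RingHom.mapMatrix_apply] at hd
    rw [← hmapz]
    show (Mp.map ((Polynomial.aeval z : ℝ[X] →ₐ[ℝ] ℂ) : ℝ[X] →+* ℂ)).det = 0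
    rw [← hd, h, map_zero]
  obtain ⟨t, ht0, ht⟩ := exists_ne_zero_eval_ne_zero hp
  refine ⟨t, ht0, ?_⟩
  have hmapt : Mp.map (Polynomial.evalRingHom t) = Q + t • P := by
    ext i j
    simp [hMp, Matrix.map_apply, Matrix.add_apply, Matrix.smul_apply, smul_eq_mul]
    ring
  have hd := RingHom.map_det (Polynomial.evalRingHom t) Mp
  rw [RingHom.mapMatrix_apply, hmapt] at hd
  simpa [← hd] using ht

lemma det_gram_ne_zero (B : Matrix (m ⊕ m) (m ⊕ m) ℝ) (hdet : B.det ≠ 0) :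
    (B.toBlocks₁₁ * B.toBlocks₁₁ᵀ + B.toBlocks₁₂ * B.toBlocks₁₂ᵀ).det ≠ 0 := by
  set P := B.toBlocks₁₁ with hP
  set Q := B.toBlocks₁₂ with hQ
  intro h0
  obtain ⟨v, hv, hGv⟩ := Matrix.exists_mulVec_eq_zero_iff.mpr h0
  have e1 : ∀ M : Matrix m m ℝ, v ⬝ᵥ ((M * Mᵀ) *ᵥ v) = (Mᵀ *ᵥ v) ⬝ᵥ (Mᵀ *ᵥ v) := by
    intro M
    rw [← mulVec_mulVec, dotProduct_mulVec, ← mulVec_transpose]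
  have hsum : (Pᵀ *ᵥ v) ⬝ᵥ (Pᵀ *ᵥ v) + (Qᵀ *ᵥ v) ⬝ᵥ (Qᵀ *ᵥ v) = 0 := by
    rw [← e1 P, ← e1 Q, ← dotProduct_add, ← add_mulVec, hGv, dotProduct_zero]
  have hnn : ∀ w : m → ℝ, 0 ≤ w ⬝ᵥ w := fun w =>
    Finset.sum_nonneg fun i _ => mul_self_nonneg _
  have hPv : Pᵀ *ᵥ v = 0 := by
    rw [← dotProduct_self_eq_zero (v := Pᵀ *ᵥ v)]
    nlinarith [hnn (Pᵀ *ᵥ v), hnn (Qᵀ *ᵥ v)]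
  have hQv : Qᵀ *ᵥ v = 0 := by
    rw [← dotProduct_self_eq_zero (v := Qᵀ *ᵥ v)]
    nlinarith [hnn (Pᵀ *ᵥ v), hnn (Qᵀ *ᵥ v)]
  have hu : Bᵀ *ᵥ Sum.elim v 0 = 0 := by
    have hB : Bᵀ = fromBlocks Pᵀ B.toBlocks₂₁ᵀ Qᵀ B.toBlocks₂₂ᵀ := by
      conv_lhs => rw [← fromBlocks_toBlocks B]
      rw [fromBlocks_transpose]
    rw [hB, fromBlocks_mulVec]
    funext i
    cases i <;> simp [hPv, hQv]
  have hune : Sum.elim v 0 ≠ (0 : (m ⊕ m) → ℝ) := by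
    intro h
    apply hv
    funext i
    simpa using congrFun h (Sum.inl i)
  have : Bᵀ.det = 0 := Matrix.exists_mulVec_eq_zero_iff.mp ⟨Sum.elim v 0, hune, hu⟩
  rw [det_transpose] at this
  exact hdet this

lemma det_ofReal_add_I_smul_ne_zero (P Q : Matrix m m ℝ)
    (hsym : P * Qᵀ = Q * Pᵀ) (hG : (P * Pᵀ + Q * Qᵀ).det ≠ 0) :
    (Q.map (algebraMap ℝ ℂ) + Complex.I • P.map (algebraMap ℝ ℂ)).det ≠ 0 := by
  set W := Q.map (algebraMap ℝ ℂ) + Complex.I • P.map (algebraMap ℝ ℂ) with hW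
  have hmapT : ∀ M : Matrix m m ℝ, (M.map (algebraMap ℝ ℂ))ᴴ = Mᵀ.map (algebraMap ℝ ℂ) := by
    intro M; ext i j
    simp [conjTranspose_apply, Matrix.map_apply, Complex.conj_ofReal]
  have hmul : ∀ M N : Matrix m m ℝ,
      (M.map (algebraMap ℝ ℂ)) * (N.map (algebraMap ℝ ℂ)) = (M * N).map (algebraMap ℝ ℂ) :=
    fun M N => (Matrix.map_mul (f := algebraMap ℝ ℂ)).symm
  have hWH : Wᴴ = Qᵀ.map (algebraMap ℝ ℂ) - Complex.I • Pᵀ.map (algebraMap ℝ ℂ) := by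
    rw [hW, conjTranspose_add, conjTranspose_smul, hmapT, hmapT]
    simp [Complex.star_def, Complex.conj_I, sub_eq_add_neg, neg_smul]
  have hprod : W * Wᴴ = (P * Pᵀ + Q * Qᵀ).map (algebraMap ℝ ℂ) := by
    rw [hWH, hW]
    simp only [Matrix.add_mul, Matrix.mul_sub, Matrix.sub_mul, Matrix.smul_mul, Matrix.mul_smul,
      smul_smul, Complex.I_mul_I, hmul, hsym, neg_one_smul, sub_neg_eq_add, Matrix.map_add]
    simp only [smul_add, smul_smul, Complex.I_mul_I, neg_one_smul, neg_smul, one_smul, neg_neg,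
      Matrix.map_add, smul_neg]
    ext i j
    simp [Matrix.map_apply, Matrix.add_apply]
    ring
  have h2 : W.det * star W.det = algebraMap ℝ ℂ ((P * Pᵀ + Q * Qᵀ).det) := by
    have hd := RingHom.map_det (algebraMap ℝ ℂ) (P * Pᵀ + Q * Qᵀ)
    rw [RingHom.mapMatrix_apply] at hd
    calc W.det * star W.det = W.det * Wᴴ.det := by rw [det_conjTranspose]
      _ = (W * Wᴴ).det := (det_mul _ _).symm
      _ = _ := by rw [hprod, ← hd]
  intro h
  rw [h, zero_mul] at h2
  exact hG (by simpa using h2.symm)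

lemma shear_mem_symplectic (C : Matrix m m ℝ) (hC : Cᵀ = C) :
    fromBlocks 1 C 0 1 ∈ Matrix.symplecticGroup m ℝ := by
  rw [SymplecticGroup.mem_iff, Matrix.J, fromBlocks_transpose, fromBlocks_multiply,
    fromBlocks_multiply]
  simp [hC]

end FreeShiftAux

end

section

open FreeShiftAux

noncomputable section

/-- Every `𝒜 ∈ Sp(2d,ℝ)` factors as `𝒜 = Ξ · 𝒜'` with `Ξ ∈ Sp(2d,ℝ)` free (upper-right
`2d×2d` block invertible) and `𝒜' ∈ Sp(2d,ℝ)` shift-invertible. -/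
theorem free_times_shift_invertible (d : ℕ) (hd : 1 ≤ d)
    (A : Matrix ((Fin d ⊕ Fin d) ⊕ (Fin d ⊕ Fin d)) ((Fin d ⊕ Fin d) ⊕ (Fin d ⊕ Fin d)) ℝ)
    (hA : A ∈ Matrix.symplecticGroup (Fin d ⊕ Fin d) ℝ) :
    ∃ (Xi A' : Matrix ((Fin d ⊕ Fin d) ⊕ (Fin d ⊕ Fin d))
        ((Fin d ⊕ Fin d) ⊕ (Fin d ⊕ Fin d)) ℝ),
      Xi ∈ Matrix.symplecticGroup (Fin d ⊕ Fin d) ℝ ∧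
      IsUnit Xi.toBlocks₁₂ ∧
      A' ∈ Matrix.symplecticGroup (Fin d ⊕ Fin d) ℝ ∧
      IsUnit (EMat A') ∧
      A = Xi * A' := by
  classical
  set P := A.toBlocks₁₁ with hPdef
  set Q := A.toBlocks₁₂ with hQdef
  have hdetA : A.det ≠ 0 := (SymplecticGroup.symplectic_det hA).ne_zero
  have hsym : P * Qᵀ = Q * Pᵀ := by
    have hJ := SymplecticGroup.mem_iff.mp hA
    have hb : (A * Matrix.J (Fin d ⊕ Fin d) ℝ * Aᵀ).toBlocks₁₁ =
        (Matrix.J (Fin d ⊕ Fin d) ℝ).toBlocks₁₁ := congrArg Matrix.toBlocks₁₁ hJ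
    rw [← fromBlocks_toBlocks A] at hb
    rw [Matrix.J, fromBlocks_transpose, fromBlocks_multiply, fromBlocks_multiply,
      toBlocks_fromBlocks₁₁, toBlocks_fromBlocks₁₁] at hb
    simp only [Matrix.mul_zero, Matrix.mul_one, Matrix.zero_mul, Matrix.mul_neg,
      Matrix.neg_mul, Matrix.one_mul, zero_add, add_zero] at hb
    rw [← sub_eq_add_neg] at hb
    exact (sub_eq_zero.mp hb).symm
  have hG : (P * Pᵀ + Q * Qᵀ).det ≠ 0 := det_gram_ne_zero A hdetA
  obtain ⟨t₀, ht₀0, ht₀⟩ := exists_real_det_ne_zero P Q Complex.I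
    (det_ofReal_add_I_smul_ne_zero P Q hsym hG)
  set B₀ : Matrix (Fin d ⊕ Fin d) (Fin d ⊕ Fin d) ℝ := fromBlocks 0 1 1 0 with hB₀
  have hz2 : ((Q + t₀ • P).map (algebraMap ℝ ℂ) +
      (0 : ℂ) • (P * B₀).map (algebraMap ℝ ℂ)).det ≠ 0 := by
    rw [zero_smul, add_zero]
    have hd := RingHom.map_det (algebraMap ℝ ℂ) (Q + t₀ • P)
    rw [RingHom.mapMatrix_apply] at hd
    rw [← hd]
    simpa using ht₀
  obtain ⟨s₀, hs₀0, hs₀⟩ := exists_real_det_ne_zero (P * B₀) (Q + t₀ • P) 0 hz2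
  set C : Matrix (Fin d ⊕ Fin d) (Fin d ⊕ Fin d) ℝ := t₀ • 1 + s₀ • B₀ with hC
  have hCsym : Cᵀ = C := by
    rw [hC, transpose_add, transpose_smul, transpose_smul, transpose_one, hB₀,
      fromBlocks_transpose]
    simp
  have hnCsym : (-C)ᵀ = -C := by rw [transpose_neg, hCsym]
  set S : Matrix ((Fin d ⊕ Fin d) ⊕ (Fin d ⊕ Fin d)) ((Fin d ⊕ Fin d) ⊕ (Fin d ⊕ Fin d)) ℝ :=
    fromBlocks 1 C 0 1 with hS
  set S' : Matrix ((Fin d ⊕ Fin d) ⊕ (Fin d ⊕ Fin d)) ((Fin d ⊕ Fin d) ⊕ (Fin d ⊕ Fin d)) ℝ :=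
    fromBlocks 1 (-C) 0 1 with hS'
  have hSmem : S ∈ Matrix.symplecticGroup (Fin d ⊕ Fin d) ℝ := shear_mem_symplectic C hCsym
  have hS'mem : S' ∈ Matrix.symplecticGroup (Fin d ⊕ Fin d) ℝ := shear_mem_symplectic (-C) hnCsym
  refine ⟨A * S, S', mul_mem hA hSmem, ?_, hS'mem, ?_, ?_⟩
  · -- free
    have hAS : A * S = fromBlocks P (P * C + Q) A.toBlocks₂₁ (A.toBlocks₂₁ * C + A.toBlocks₂₂) := by
      conv_lhs => rw [← fromBlocks_toBlocks A]
      rw [hS, fromBlocks_multiply]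
      simp [← hPdef, ← hQdef]
    rw [hAS, toBlocks_fromBlocks₁₂]
    have hPC : P * C + Q = Q + t₀ • P + s₀ • (P * B₀) := by
      rw [hC, Matrix.mul_add, Matrix.mul_smul, Matrix.mul_smul, Matrix.mul_one]
      abel
    rw [hPC]
    exact (Matrix.isUnit_iff_isUnit_det _).mpr (isUnit_iff_ne_zero.mpr hs₀)
  · -- shift-invertible
    have hE : EMat S' = fromBlocks (1 : Matrix (Fin d) (Fin d) ℝ) ((-t₀) • 1) 0 ((-s₀) • 1) := by
      ext i j
      cases i <;> cases j <;>
        simp [EMat, hS', hC, hB₀, Matrix.submatrix_apply, Matrix.fromBlocks_apply₁₁,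
          Matrix.fromBlocks_apply₁₂, Matrix.one_apply, Matrix.add_apply, Matrix.smul_apply,
          Matrix.neg_apply, smul_eq_mul]
    rw [hE]
    refine (Matrix.isUnit_iff_isUnit_det _).mpr (isUnit_iff_ne_zero.mpr ?_)
    rw [det_fromBlocks_zero₂₁, det_one, one_mul, Matrix.det_smul, det_one, mul_one]
    simp only [Fintype.card_fin]
    exact pow_ne_zero _ (neg_ne_zero.mpr hs₀0)
  · -- factorization
    have hSS' : S * S' = 1 := by
      rw [hS, hS', fromBlocks_multiply]
      simp [fromBlocks_one]
    rw [Matrix.mul_assoc, hSS', Matrix.mul_one]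

end

end
end

section
/- For every 𝒜 ∈ Sp(2d,ℝ) there exist 𝒜'' ∈ Sp(2d,ℝ) shift-invertible (i.e., E_{𝒜''} is invertible) and Θ ∈ Sp(2d,ℝ) whose upper-left 2d×2d block is invertible, such that 𝒜 = 𝒜'' · Θ. -/
open Matrix

noncomputable section

variable {n : Type*} [Fintype n] [DecidableEq n]

/-- determinant polynomial det(X - t Y) -/
noncomputable def dp (X Y : Matrix n n ℝ) : Polynomial ℝ :=
  ((X.map Polynomial.C) - (Polynomial.X : Polynomial ℝ) • (Y.map Polynomial.C)).det

lemma dp_eval (X Y : Matrix n n ℝ) (t : ℝ) : (dp X Y).eval t = (X - t • Y).det := by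
  have h := RingHom.map_det (Polynomial.evalRingHom t)
      ((X.map Polynomial.C) - (Polynomial.X : Polynomial ℝ) • (Y.map Polynomial.C))
  rw [dp]
  exact h.trans (by congr 1; ext i j; simp [Matrix.map_apply]; ring)

lemma dp_evalI (X Y : Matrix n n ℝ) :
    Polynomial.eval₂ (algebraMap ℝ ℂ) (-Complex.I) (dp X Y)
      = (X.map (algebraMap ℝ ℂ) + Complex.I • Y.map (algebraMap ℝ ℂ)).det := by
  have h := RingHom.map_det (Polynomial.eval₂RingHom (algebraMap ℝ ℂ) (-Complex.I))
      ((X.map Polynomial.C) - (Polynomial.X : Polynomial ℝ) • (Y.map Polynomial.C))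
  rw [dp]
  refine h.trans ?_
  congr 1
  ext i j
  simp [Matrix.map_apply]
  ring

lemma aux_mul (x y : Matrix n n ℂ) (h : yᵀ * x = xᵀ * y) :
    (xᵀ - Complex.I • yᵀ) * (x + Complex.I • y) = xᵀ * x + yᵀ * y := by
  rw [sub_mul, mul_add, mul_add, smul_mul_assoc, smul_mul_assoc, mul_smul_comm,
    mul_smul_comm, smul_smul, Complex.I_mul_I, neg_one_smul, h]
  abel

lemma dot_self_zero {v : n → ℝ} (h : v ⬝ᵥ v = 0) : v = 0 := by
  ext i
  have h2 : ∀ j ∈ Finset.univ, (0:ℝ) ≤ v j * v j := fun j _ => mul_self_nonneg _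
  have := (Finset.sum_eq_zero_iff_of_nonneg h2).mp h i (Finset.mem_univ i)
  simpa [mul_self_eq_zero] using this

/-- the key Gram-matrix invertibility -/
lemma gram_det_ne_zero (X Y : Matrix n n ℝ)
    (hinj : ∀ v : n → ℝ, X.mulVec v = 0 → Y.mulVec v = 0 → v = 0) :
    (Xᵀ * X + Yᵀ * Y).det ≠ 0 := by
  intro hdet
  obtain ⟨v, hv, hMv⟩ := (Matrix.exists_mulVec_eq_zero_iff).mpr hdet
  have key : ∀ Z : Matrix n n ℝ, v ⬝ᵥ ((Zᵀ * Z).mulVec v) = Z.mulVec v ⬝ᵥ Z.mulVec v := by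
    intro Z
    rw [← Matrix.mulVec_mulVec, Matrix.dotProduct_mulVec, Matrix.vecMul_transpose]
  have hdot : X.mulVec v ⬝ᵥ X.mulVec v + Y.mulVec v ⬝ᵥ Y.mulVec v = 0 := by
    rw [← key X, ← key Y, ← dotProduct_add, ← Matrix.add_mulVec, hMv, dotProduct_zero]
  have hX : (0:ℝ) ≤ X.mulVec v ⬝ᵥ X.mulVec v :=
    Finset.sum_nonneg fun i _ => mul_self_nonneg (X.mulVec v i)
  have hY : (0:ℝ) ≤ Y.mulVec v ⬝ᵥ Y.mulVec v :=
    Finset.sum_nonneg fun i _ => mul_self_nonneg (Y.mulVec v i)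
  have h1 : X.mulVec v = 0 := dotProduct_self_eq_zero.mp (by linarith)
  have h2 : Y.mulVec v = 0 := dotProduct_self_eq_zero.mp (by linarith)
  exact hv (hinj v h1 h2)

lemma lagrangian_exists_t (X Y : Matrix n n ℝ) (hsym : Yᵀ * X = Xᵀ * Y)
    (hinj : ∀ v : n → ℝ, X.mulVec v = 0 → Y.mulVec v = 0 → v = 0) :
    ∃ t : ℝ, (X - t • Y).det ≠ 0 := by
  set r := algebraMap ℝ ℂ
  have hsymC : (Y.map r)ᵀ * (X.map r) = (X.map r)ᵀ * (Y.map r) := by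
    rw [← Matrix.transpose_map, ← Matrix.transpose_map, ← Matrix.map_mul, ← Matrix.map_mul, hsym]
  have hmul := aux_mul (X.map r) (Y.map r) hsymC
  have hgram : ((X.map r)ᵀ * (X.map r) + (Y.map r)ᵀ * (Y.map r)).det ≠ 0 := by
    have : (X.map r)ᵀ * (X.map r) + (Y.map r)ᵀ * (Y.map r) = (Xᵀ * X + Yᵀ * Y).map r := by
      rw [Matrix.map_add _ (map_add r), ← Matrix.transpose_map, ← Matrix.transpose_map,
        ← Matrix.map_mul, ← Matrix.map_mul]
    rw [this, show (Xᵀ * X + Yᵀ * Y).map ⇑r = r.mapMatrix (Xᵀ * X + Yᵀ * Y) from rfl,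
      ← RingHom.map_det]
    simpa [r] using gram_det_ne_zero X Y hinj
  have hZ : ((X.map r) + Complex.I • (Y.map r)).det ≠ 0 := by
    intro h0
    rw [← hmul, Matrix.det_mul, h0, mul_zero] at hgram
    exact hgram rfl
  have hdp : dp X Y ≠ 0 := by
    intro h0
    rw [← dp_evalI X Y] at hZ
    rw [h0] at hZ
    simp at hZ
  by_contra hcon
  push_neg at hcon
  apply hdp
  apply Polynomial.zero_of_eval_zero
  intro t
  rw [dp_eval]
  exact hcon t

lemma exists_s (X' Y' : Matrix n n ℝ) (h0 : X'.det ≠ 0) :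
    ∃ s : ℝ, s ≠ 0 ∧ (X' - s • Y').det ≠ 0 := by
  have hdp : dp X' Y' ≠ 0 := by
    intro h
    have := dp_eval X' Y' 0
    rw [h] at this
    simp at this
    exact h0 this.symm
  have hq : (Polynomial.X : Polynomial ℝ) * dp X' Y' ≠ 0 := mul_ne_zero Polynomial.X_ne_zero hdp
  by_contra hcon
  push_neg at hcon
  apply hq
  apply Polynomial.zero_of_eval_zero
  intro s
  rcases eq_or_ne s 0 with rfl | hs
  · simp
  · rw [Polynomial.eval_mul, Polynomial.eval_X, dp_eval, hcon s hs, mul_zero]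

/-- Every `𝒜 ∈ Sp(2d,ℝ)` factors as `𝒜 = 𝒜'' · Θ` with `𝒜'' ∈ Sp(2d,ℝ)` shift-invertible
and `Θ ∈ Sp(2d,ℝ)` having invertible upper-left `2d×2d` block. -/
theorem shift_invertible_times_upper_left (d : ℕ) (hd : 1 ≤ d)
    (A : Matrix ((Fin d ⊕ Fin d) ⊕ (Fin d ⊕ Fin d)) ((Fin d ⊕ Fin d) ⊕ (Fin d ⊕ Fin d)) ℝ)
    (hA : A ∈ Matrix.symplecticGroup (Fin d ⊕ Fin d) ℝ) :
    ∃ (A'' Θ : Matrix ((Fin d ⊕ Fin d) ⊕ (Fin d ⊕ Fin d))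
        ((Fin d ⊕ Fin d) ⊕ (Fin d ⊕ Fin d)) ℝ),
      A'' ∈ Matrix.symplecticGroup (Fin d ⊕ Fin d) ℝ ∧
      IsUnit (EMat A'') ∧
      Θ ∈ Matrix.symplecticGroup (Fin d ⊕ Fin d) ℝ ∧
      IsUnit Θ.toBlocks₁₁ ∧
      A = A'' * Θ := by
  set A₁ := A.toBlocks₁₁ with hA₁
  set A₂ := A.toBlocks₁₂
  set A₃ := A.toBlocks₂₁ with hA₃
  set A₄ := A.toBlocks₂₂
  have hAblocks : A = Matrix.fromBlocks A₁ A₂ A₃ A₄ := (Matrix.fromBlocks_toBlocks A).symm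
  have hdetA : A.det ≠ 0 := (SymplecticGroup.symplectic_det hA).ne_zero
  -- the symplectic column relation
  have hrel : A₃ᵀ * A₁ = A₁ᵀ * A₃ := by
    have h' := SymplecticGroup.mem_iff'.mp hA
    rw [hAblocks, Matrix.J, Matrix.fromBlocks_transpose, Matrix.fromBlocks_multiply,
      Matrix.fromBlocks_multiply] at h'
    have h11 := congrArg Matrix.toBlocks₁₁ h'
    simp only [Matrix.toBlocks_fromBlocks₁₁] at h11
    have h2 : A₃ᵀ * A₁ + -(A₁ᵀ * A₃) = 0 := by simpa using h11
    rw [← sub_eq_zero, sub_eq_add_neg]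
    exact h2
  -- joint injectivity of A₁, A₃
  have hinj : ∀ v : (Fin d ⊕ Fin d) → ℝ, A₁.mulVec v = 0 → A₃.mulVec v = 0 → v = 0 := by
    intro v h1 h3
    by_contra hv
    apply hdetA
    rw [← Matrix.exists_mulVec_eq_zero_iff]
    refine ⟨Sum.elim v 0, ?_, ?_⟩
    · intro hw
      apply hv
      ext i
      exact congrFun hw (Sum.inl i)
    · rw [hAblocks, Matrix.fromBlocks_mulVec]
      simp [h1, h3]
  obtain ⟨t₁, ht₁⟩ := lagrangian_exists_t A₁ A₃ hrel hinj
  set B₀ : Matrix (Fin d ⊕ Fin d) (Fin d ⊕ Fin d) ℝ := Matrix.fromBlocks 0 1 1 0 with hB₀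
  obtain ⟨s, hs0, hsdet⟩ := exists_s (A₁ - t₁ • A₃) (B₀ * A₃) ht₁
  set B : Matrix (Fin d ⊕ Fin d) (Fin d ⊕ Fin d) ℝ := t₁ • 1 + s • B₀ with hB
  have hBt : Bᵀ = B := by
    rw [hB, hB₀]
    simp [Matrix.transpose_add, Matrix.transpose_smul, Matrix.fromBlocks_transpose]
  set N : Matrix ((Fin d ⊕ Fin d) ⊕ (Fin d ⊕ Fin d)) ((Fin d ⊕ Fin d) ⊕ (Fin d ⊕ Fin d)) ℝ := Matrix.fromBlocks 1 B 0 1 with hN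
  set N' : Matrix ((Fin d ⊕ Fin d) ⊕ (Fin d ⊕ Fin d)) ((Fin d ⊕ Fin d) ⊕ (Fin d ⊕ Fin d)) ℝ := Matrix.fromBlocks 1 (-B) 0 1 with hN'
  have memN : N ∈ Matrix.symplecticGroup (Fin d ⊕ Fin d) ℝ := by
    rw [SymplecticGroup.mem_iff, hN, Matrix.J, Matrix.fromBlocks_transpose,
      Matrix.fromBlocks_multiply, Matrix.fromBlocks_multiply]
    simp [hBt]
  have memN' : N' ∈ Matrix.symplecticGroup (Fin d ⊕ Fin d) ℝ := by
    rw [SymplecticGroup.mem_iff, hN', Matrix.J, Matrix.fromBlocks_transpose,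
      Matrix.fromBlocks_multiply, Matrix.fromBlocks_multiply]
    simp [Matrix.transpose_neg, hBt]
  have hNN' : N * N' = 1 := by
    rw [hN, hN', Matrix.fromBlocks_multiply]
    simp only [one_mul, mul_one, mul_zero, zero_mul, Matrix.mul_zero, Matrix.zero_mul,
      Matrix.mul_one, Matrix.one_mul, add_zero, zero_add, neg_add_cancel]
    exact Matrix.fromBlocks_one
  refine ⟨N, N' * A, memN, ?_, Submonoid.mul_mem _ memN' hA, ?_, ?_⟩
  · -- EMat N is invertible
    have hEN : EMat N = Matrix.fromBlocks (1 : Matrix (Fin d) (Fin d) ℝ) (t₁ • 1) 0 (s • 1) := by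
      ext i j
      cases i <;> cases j <;>
        simp [EMat, hN, hB, hB₀, Matrix.one_apply, Sum.inl.injEq, Sum.inr.injEq]
    rw [hEN, Matrix.isUnit_iff_isUnit_det, Matrix.det_fromBlocks_zero₂₁]
    simp only [Matrix.det_one, one_mul, Matrix.det_smul, Matrix.det_one, mul_one]
    exact (isUnit_iff_ne_zero).mpr (by positivity)
  · -- upper-left block of Θ
    have hblock : (N' * A).toBlocks₁₁ = (A₁ - t₁ • A₃) - s • (B₀ * A₃) := by
      rw [hAblocks, hN', Matrix.fromBlocks_multiply]
      simp only [Matrix.toBlocks_fromBlocks₁₁, Matrix.one_mul, Matrix.zero_mul, Matrix.neg_mul]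
      rw [hB, add_mul, smul_mul_assoc, smul_mul_assoc, one_mul]
      abel
    rw [hblock, Matrix.isUnit_iff_isUnit_det]
    exact (isUnit_iff_ne_zero).mpr hsdet
  · rw [← Matrix.mul_assoc, hNN', Matrix.one_mul]

end
end
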